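/- arXiv:2202.01801 — 5 statements merged into one kernel-verified Lean document; each statement's English description precedes it below -/
import Mathlib

section
/- For every integer n ≥ 2, the function x ↦ x^{2n-1} · R_n(x) is NOT completely monotonic on (0,∞). Consequently the completely monotonic degree of R_n with respect to x on (0,∞) is strictly less than 2n−1. -/
open MeasureTheory Real Finset

/-- `R n x` is the remainder of the asymptotic expansion of `log Γ`. -/
noncomputable def R (n : ℕ) (x : ℝ) : ℝ :=
  (-1 : ℝ) ^ n * (Real.log (Real.Gamma x) - (x - 1/2) * Real.log x + x
    - (1/2) * Real.log (2 * π)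
    - ∑ k ∈ Finset.Icc 1 n,
        ((bernoulli (2*k) : ℚ) : ℝ) / ((2*(k:ℝ)) * (2*(k:ℝ) - 1)) * x ^ (1 - 2*(k:ℤ)))

def CompletelyMonotonicOn (f : ℝ → ℝ) : Prop :=
  ContDiffOn ℝ (⊤ : ℕ∞) f (Set.Ioi 0) ∧
    ∀ k : ℕ, ∀ x : ℝ, 0 < x → 0 ≤ (-1 : ℝ) ^ k * iteratedDeriv k f x

lemma bern_pos {k : ℕ} (hk : k ≠ 0) :
    0 < (-1:ℝ)^(k+1) * ((bernoulli (2*k) : ℚ) : ℝ) := by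
  have hs := hasSum_zeta_nat (k := k) hk
  have h1 : (1:ℝ) ≤ ((-1 : ℝ) ^ (k + 1) * (2 : ℝ) ^ (2 * k - 1) * π ^ (2 * k) *
        ((bernoulli (2 * k) : ℚ) : ℝ) / (Nat.factorial (2 * k) : ℝ)) := by
    have := le_hasSum hs 1 (fun j _ => by positivity)
    simpa using this
  have hP : (0:ℝ) < (2 : ℝ) ^ (2 * k - 1) * π ^ (2 * k) / (Nat.factorial (2 * k) : ℝ) := by
    have := pi_pos; positivity
  by_contra hc
  push_neg at hc
  have : ((-1 : ℝ) ^ (k + 1) * (2 : ℝ) ^ (2 * k - 1) * π ^ (2 * k) *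
        ((bernoulli (2 * k) : ℚ) : ℝ) / (Nat.factorial (2 * k) : ℝ))
      = ((-1:ℝ)^(k+1) * ((bernoulli (2*k) : ℚ) : ℝ)) *
        ((2 : ℝ) ^ (2 * k - 1) * π ^ (2 * k) / (Nat.factorial (2 * k) : ℝ)) := by ring
  rw [this] at h1
  nlinarith

noncomputable def cc (k : ℕ) : ℝ :=
  ((bernoulli (2*k) : ℚ) : ℝ) / ((2*(k:ℝ)) * (2*(k:ℝ) - 1))

noncomputable def HH (n : ℕ) (x : ℝ) : ℝ :=
  (-1:ℝ)^n * (x^(2*n-3) * Real.log (Real.Gamma (x+1))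
    - (x + 1/2) * x^(2*n-4) * (x * Real.log x)
    + x^(2*n-3) * (x - (1/2) * Real.log (2*π)))
  - (-1:ℝ)^n * ∑ k ∈ Finset.Icc 1 (n-1), cc k * x^(2*(n-k)-2)

lemma key_id (n : ℕ) (hn : 2 ≤ n) {x : ℝ} (hx : 0 < x) :
    x ^ (2*n-1) * R n x = (-(-1:ℝ)^n * cc n) + x^2 * HH n x := by
  obtain ⟨m, rfl⟩ : ∃ m, n = m + 2 := ⟨n - 2, by omega⟩
  have hx0 : x ≠ 0 := hx.ne'
  have hlog : Real.log (Real.Gamma x) = Real.log (Real.Gamma (x+1)) - Real.log x := by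
    rw [Real.Gamma_add_one hx0, Real.log_mul hx0 (Real.Gamma_pos_of_pos hx).ne']
    ring
  have hterm : ∀ k ∈ Finset.Icc 1 (m+2), x ^ (2*(m+2)-1) * (cc k * x ^ (1 - 2*(k:ℤ)))
      = cc k * x ^ (2*((m+2)-k)) := by
    intro k hk
    rw [Finset.mem_Icc] at hk
    have h1 : x ^ (2*(m+2)-1) * x ^ (1 - 2*(k:ℤ)) = x ^ (2*((m+2)-k)) := by
      rw [← zpow_natCast x (2*(m+2)-1), ← zpow_add₀ hx0, ← zpow_natCast x (2*((m+2)-k))]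
      congr 1
      omega
    rw [← h1]; ring
  have hsum : x ^ (2*(m+2)-1) * (∑ k ∈ Finset.Icc 1 (m+2), cc k * x ^ (1 - 2*(k:ℤ)))
      = cc (m+2) + x^2 * ∑ k ∈ Finset.Icc 1 (m+1), cc k * x^(2*((m+2)-k)-2) := by
    rw [Finset.mul_sum, Finset.sum_congr rfl hterm,
      Finset.sum_Icc_succ_top (by omega : 1 ≤ m+2)]
    have h2 : ∀ k ∈ Finset.Icc 1 (m+1), cc k * x^(2*((m+2)-k))
        = x^2 * (cc k * x^(2*((m+2)-k)-2)) := by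
      intro k hk
      rw [Finset.mem_Icc] at hk
      have h3 : x^(2*((m+2)-k)) = x^2 * x^(2*((m+2)-k)-2) := by
        rw [← pow_add]; congr 1; omega
      rw [h3]; ring
    rw [Finset.sum_congr rfl h2, ← Finset.mul_sum]
    have hmm : m+1+1 = m+2 := rfl
    rw [hmm, add_comm]
    norm_num
  have e1 : x^(2*(m+2)-1) = x^2 * x^(2*(m+2)-3) := by
    rw [show 2*(m+2)-1 = 2 + (2*(m+2)-3) from by omega, pow_add]
  have e2 : x^(2*(m+2)-3) = x^(2*(m+2)-4) * x := by
    rw [show 2*(m+2)-3 = (2*(m+2)-4)+1 from by omega, pow_succ]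
  have hR : R (m+2) x = (-1:ℝ)^(m+2) * (Real.log (Real.Gamma x) - (x - 1/2) * Real.log x + x
      - (1/2) * Real.log (2 * π) - ∑ k ∈ Finset.Icc 1 (m+2), cc k * x ^ (1 - 2*(k:ℤ))) := rfl
  rw [hR, hlog, HH]
  have expand : x ^ (2*(m+2)-1) * ((-1:ℝ)^(m+2) * (Real.log (Real.Gamma (x+1)) - Real.log x
      - (x - 1/2) * Real.log x + x - (1/2) * Real.log (2 * π)
      - ∑ k ∈ Finset.Icc 1 (m+2), cc k * x ^ (1 - 2*(k:ℤ))))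
      = (-1:ℝ)^(m+2) * (x ^ (2*(m+2)-1) * (Real.log (Real.Gamma (x+1))
          - (x + 1/2) * Real.log x + x - (1/2) * Real.log (2 * π)))
        - (-1:ℝ)^(m+2) * (x ^ (2*(m+2)-1) * (∑ k ∈ Finset.Icc 1 (m+2), cc k * x ^ (1 - 2*(k:ℤ)))) := by
    ring
  rw [expand, hsum, e1, e2]
  simp only [show m+2-1 = m+1 from rfl]
  ring

lemma HH_cont (n : ℕ) : ContinuousAt (HH n) 0 := by
  have c1 : ContinuousAt (fun x : ℝ => Real.log (Real.Gamma (x+1))) 0 := by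
    have hg1 : ContinuousAt Real.Gamma (0 + 1 : ℝ) := by
      rw [zero_add]
      refine (Real.differentiableAt_Gamma ?_).continuousAt
      intro m h
      have h0 : (0:ℝ) ≤ m := Nat.cast_nonneg m
      linarith
    have hg : ContinuousAt (fun x : ℝ => Real.Gamma (x+1)) 0 :=
      ContinuousAt.comp (g := Real.Gamma) (f := fun x : ℝ => x+1) (x := (0:ℝ)) hg1 (by fun_prop)
    exact hg.log (by simp [Real.Gamma_one])
  have c2 : ContinuousAt (fun x : ℝ => x * Real.log x) 0 :=
    Real.continuous_mul_log.continuousAt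
  unfold HH
  fun_prop

lemma HH_zero (n : ℕ) (hn : 2 ≤ n) : HH n 0 = -(-1:ℝ)^n * cc (n-1) := by
  have h1 : (0:ℝ)^(2*n-3) = 0 := zero_pow (by omega)
  have hsum : ∑ k ∈ Finset.Icc 1 (n-1), cc k * (0:ℝ)^(2*(n-k)-2) = cc (n-1) := by
    rw [Finset.sum_eq_single_of_mem (n-1) (Finset.mem_Icc.mpr ⟨by omega, le_refl _⟩)]
    · rw [show 2*(n-(n-1))-2 = 0 from by omega, pow_zero, mul_one]
    · intro k hk hne
      rw [Finset.mem_Icc] at hk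
      rw [zero_pow (by omega), mul_zero]
  unfold HH
  rw [h1, hsum]
  simp

open Filter Topology in
theorem stmt1 (n : ℕ) (hn : 2 ≤ n) :
    ¬ CompletelyMonotonicOn (fun x : ℝ => x ^ (2*n - 1) * R n x) := by
  set g : ℝ → ℝ := fun x : ℝ => x ^ (2*n - 1) * R n x with hgdef
  rintro ⟨hsmooth, hsign⟩
  set L : ℝ := -(-1:ℝ)^n * cc n with hL
  set A : ℝ := -(-1:ℝ)^n * cc (n-1) with hAdef
  -- A < 0
  have hA : A < 0 := by
    have hb := bern_pos (k := n-1) (by omega)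
    rw [show n-1+1 = n from by omega] at hb
    have hc : (1:ℝ) ≤ ((n-1 : ℕ) : ℝ) := by exact_mod_cast Nat.one_le_iff_ne_zero.mpr (by omega)
    have hD : (0:ℝ) < (2*((n-1:ℕ):ℝ)) * (2*((n-1:ℕ):ℝ) - 1) := by nlinarith
    have : A = -(((-1:ℝ)^n * ((bernoulli (2*(n-1)) : ℚ) : ℝ)) /
        ((2*((n-1:ℕ):ℝ)) * (2*((n-1:ℕ):ℝ) - 1))) := by
      rw [hAdef]; unfold cc; ring
    rw [this]
    exact neg_neg_iff_pos.mpr (div_pos hb hD)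
  -- limit of HH
  have hHt : Tendsto (HH n) (𝓝[>] (0:ℝ)) (𝓝 A) := by
    have h1 := (HH_cont n).tendsto
    rw [HH_zero n hn] at h1
    exact h1.mono_left nhdsWithin_le_nhds
  -- identity
  have hgid : ∀ x ∈ Set.Ioi (0:ℝ), g x = L + x^2 * HH n x := fun x hx => key_id n hn hx
  -- g tends to L
  have hx2 : Tendsto (fun x : ℝ => x^2 * HH n x) (𝓝[>] (0:ℝ)) (𝓝 0) := by
    have h2 : Tendsto (fun x : ℝ => x^2) (𝓝[>] (0:ℝ)) (𝓝 0) := by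
      have := ((continuous_pow 2).tendsto (0:ℝ)).mono_left (nhdsWithin_le_nhds (s := Set.Ioi 0))
      simpa using this
    simpa using h2.mul hHt
  have hgL : Tendsto g (𝓝[>] (0:ℝ)) (𝓝 L) := by
    have h2 : Tendsto (fun x : ℝ => L + x^2 * HH n x) (𝓝[>] (0:ℝ)) (𝓝 (L + 0)) :=
      tendsto_const_nhds.add hx2
    rw [add_zero] at h2
    refine h2.congr' ?_
    filter_upwards [self_mem_nhdsWithin] with x hx
    exact (hgid x hx).symm
  -- convexity
  have hconv : ConvexOn ℝ (Set.Ioi 0) g := by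
    apply convexOn_of_deriv2_nonneg (convex_Ioi 0) hsmooth.continuousOn
    · rw [interior_Ioi]
      exact hsmooth.differentiableOn (by simp)
    · rw [interior_Ioi]
      exact (hsmooth.deriv_of_isOpen (m := 1) isOpen_Ioi (WithTop.coe_le_coe.mpr (le_top (a := ((1 + 1 : ℕ) : ℕ∞))))).differentiableOn one_ne_zero
    · intro x hx
      rw [interior_Ioi] at hx
      have := hsign 2 x hx
      rw [← iteratedDeriv_eq_iterate]
      simpa using this
  -- pick z with HH n z < 0
  obtain ⟨z, hHz, hz'⟩ := ((hHt.eventually_lt_const hA).and self_mem_nhdsWithin).exists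
  have hz : (0:ℝ) < z := hz'
  have hgz : g z - L < 0 := by
    have h1 := hgid z hz
    nlinarith [sq_nonneg z, mul_pos (mul_pos hz hz) (neg_pos.mpr hHz)]
  -- slope inequality
  have key1 : ∀ y : ℝ, 0 < y → y < z → (g y - L)/(y - 0) ≤ (g z - g y)/(z - y) := by
    intro y hy hyz
    have hxy : ∀ᶠ x in 𝓝[>] (0:ℝ), x < y := (eventually_lt_nhds hy).filter_mono nhdsWithin_le_nhds
    have hev : ∀ᶠ x in 𝓝[>] (0:ℝ), (g y - g x)/(y - x) ≤ (g z - g y)/(z - y) := by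
      filter_upwards [self_mem_nhdsWithin, hxy] with x hx hxy'
      exact hconv.slope_mono_adjacent hx (Set.mem_Ioi.mpr hz) hxy' hyz
    have hid : Tendsto (fun x : ℝ => x) (𝓝[>] (0:ℝ)) (𝓝 0) :=
      tendsto_id.mono_left nhdsWithin_le_nhds
    have hT : Tendsto (fun x : ℝ => (g y - g x)/(y - x)) (𝓝[>] (0:ℝ)) (𝓝 ((g y - L)/(y - 0))) :=
      (tendsto_const_nhds.sub hgL).div (tendsto_const_nhds.sub hid)
        (by rw [sub_zero]; exact hy.ne')
    exact le_of_tendsto hT hev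
  -- limits as y → 0
  have hlhs : Tendsto (fun y : ℝ => (g y - L)/(y - 0)) (𝓝[>] (0:ℝ)) (𝓝 0) := by
    have h2 : Tendsto (fun y : ℝ => y * HH n y) (𝓝[>] (0:ℝ)) (𝓝 (0 * A)) :=
      (tendsto_id.mono_left nhdsWithin_le_nhds).mul hHt
    rw [zero_mul] at h2
    refine h2.congr' ?_
    filter_upwards [self_mem_nhdsWithin] with y hy
    rw [Set.mem_Ioi] at hy
    rw [hgid y hy]
    field_simp
    ring
  have hrhs : Tendsto (fun y : ℝ => (g z - g y)/(z - y)) (𝓝[>] (0:ℝ)) (𝓝 ((g z - L)/(z - 0))) := by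
    refine (tendsto_const_nhds.sub hgL).div
      (tendsto_const_nhds.sub (tendsto_id.mono_left nhdsWithin_le_nhds)) ?_
    rw [sub_zero]; exact hz.ne'
  have hev2 : ∀ᶠ y in 𝓝[>] (0:ℝ), (fun y : ℝ => (g y - L)/(y - 0)) y ≤
      (fun y : ℝ => (g z - g y)/(z - y)) y := by
    have hyz : ∀ᶠ y in 𝓝[>] (0:ℝ), y < z := (eventually_lt_nhds hz).filter_mono nhdsWithin_le_nhds
    filter_upwards [self_mem_nhdsWithin, hyz] with y hy hyz'
    exact key1 y (Set.mem_Ioi.mp hy) hyz'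
  have hfin : (0:ℝ) ≤ (g z - L)/(z - 0) := le_of_tendsto_of_tendsto hlhs hrhs hev2
  rw [sub_zero] at hfin
  have : (g z - L)/z < 0 := div_neg_of_neg_of_pos hgz hz
  linarith
end

section
/- For every integer n ≥ 0, (1/(2π)^{2n+2}) ∫₀^∞ x^{2n} · log(1 + e^{−2x} − 2e^{−x}) dx = (−1)^{n+1} B_{2n+2} / ((2n+2)(2n+1)). -/
/-!
Expanding `log (1 - e^{-x}) = -∑_{k ≥ 1} e^{-kx} / k` and integrating term by term against `x^m`
(the terms have constant sign, so this is legitimate) gives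
`∫₀^∞ x^m log (1 - e^{-x}) dx = -m! ζ(m + 2)`. Since the integrand of the theorem is
`2 x^{2n} log (1 - e^{-x})`, Euler's formula for `ζ(2n + 2)` in terms of `B_{2n+2}` finishes the proof.
-/

open MeasureTheory Real Finset Nat

lemma integral_pow_mul_exp_neg_mul_Ioi (m : ℕ) {c : ℝ} (hc : 0 < c) :
    ∫ x in Set.Ioi (0 : ℝ), x ^ m * exp (-(c * x)) = m ! / c ^ (m + 1) := by
  have h := integral_rpow_mul_exp_neg_mul_Ioi (a := (m : ℝ) + 1) (by positivity) hc
  rw [add_sub_cancel_right, Gamma_nat_eq_factorial, ← Nat.cast_succ] at h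
  simp_rw [rpow_natCast] at h
  rw [h, div_pow, one_pow, div_mul_eq_mul_div, one_mul]

lemma integrableOn_pow_mul_exp_neg_mul (m : ℕ) {c : ℝ} (hc : 0 < c) :
    IntegrableOn (fun x : ℝ => x ^ m * exp (-(c * x))) (Set.Ioi 0) :=
  .of_integral_ne_zero (by rw [integral_pow_mul_exp_neg_mul_Ioi m hc]; positivity)

lemma hasSum_log_one_sub_exp_neg {x : ℝ} (hx : 0 < x) :
    HasSum (fun k : ℕ => -(exp (-((k + 1) * x)) / (k + 1))) (log (1 - exp (-x))) := by
  have habs : |exp (-x)| < 1 := by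
    rw [abs_of_pos (exp_pos _)]
    exact exp_lt_one_iff.2 (neg_neg_of_pos hx)
  have h := (hasSum_pow_div_log_of_abs_lt_one habs).neg
  rw [neg_neg] at h
  refine h.congr_fun fun k => ?_
  rw [← exp_nat_mul]
  push_cast
  ring_nf

lemma log_one_add_exp_neg_two_mul_sub (x : ℝ) :
    log (1 + exp (-2 * x) - 2 * exp (-x)) = 2 * log (1 - exp (-x)) := by
  have hsq : 1 + exp (-2 * x) - 2 * exp (-x) = (1 - exp (-x)) ^ 2 := by
    rw [show -2 * x = -x + -x by ring, exp_add]
    ring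
  rw [hsq, Real.log_pow, Nat.cast_ofNat]

theorem hasSum_integral_pow_mul_log_one_sub_exp_neg (m : ℕ) :
    HasSum (fun k : ℕ => -(m ! / ((k : ℝ) + 1) ^ (m + 2)))
      (∫ x in Set.Ioi (0 : ℝ), x ^ m * log (1 - exp (-x))) := by
  set F : ℕ → ℝ → ℝ := fun k x => x ^ m * -(exp (-((k + 1) * x)) / (k + 1)) with hF
  have hF_eq (k : ℕ) : F k = fun x => -(1 / ((k : ℝ) + 1)) * (x ^ m * exp (-((k + 1) * x))) := by
    funext x
    rw [hF]
    ring
  have hF_norm (k : ℕ) : ∀ x ∈ Set.Ioi (0 : ℝ),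
      ‖F k x‖ = 1 / ((k : ℝ) + 1) * (x ^ m * exp (-((k + 1) * x))) := fun x hx => by
    rw [hF_eq, norm_mul, norm_neg, Real.norm_of_nonneg (by positivity),
      Real.norm_of_nonneg (by have : 0 < x := hx; positivity)]
  have hF_integral (k : ℕ) : ∫ x in Set.Ioi (0 : ℝ), F k x = -(m ! / ((k : ℝ) + 1) ^ (m + 2)) := by
    rw [hF_eq, integral_const_mul, integral_pow_mul_exp_neg_mul_Ioi m (by positivity)]
    field_simp
    ring
  have hF_int (k : ℕ) : Integrable (F k) (volume.restrict (Set.Ioi 0)) := by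
    rw [hF_eq]
    exact (integrableOn_pow_mul_exp_neg_mul m (by positivity)).const_mul _
  have hF_sum : Summable fun k => ∫ x in Set.Ioi (0 : ℝ), ‖F k x‖ := by
    have hζ : Summable fun k : ℕ => 1 / ((k : ℝ) + 1) ^ (m + 2) := by
      exact_mod_cast (summable_nat_add_iff 1).2 (summable_one_div_nat_pow.2 (by omega))
    refine (hζ.mul_left (m ! : ℝ)).congr fun k => ?_
    rw [setIntegral_congr_fun measurableSet_Ioi (hF_norm k), integral_const_mul,
      integral_pow_mul_exp_neg_mul_Ioi m (by positivity)]
    field_simp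
    ring
  have hF_tsum : ∀ x ∈ Set.Ioi (0 : ℝ), ∑' k, F k x = x ^ m * log (1 - exp (-x)) :=
    fun x hx => ((hasSum_log_one_sub_exp_neg hx).mul_left (x ^ m)).tsum_eq
  rw [← setIntegral_congr_fun measurableSet_Ioi hF_tsum, ← funext hF_integral]
  exact hasSum_integral_of_summable_integral_norm hF_int hF_sum

lemma hasSum_one_div_succ_pow_even {j : ℕ} (hj : j ≠ 0) :
    HasSum (fun k : ℕ => 1 / ((k : ℝ) + 1) ^ (2 * j))
      ((-1 : ℝ) ^ (j + 1) * 2 ^ (2 * j - 1) * π ^ (2 * j) * bernoulli (2 * j) / (2 * j)!) := by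
  simpa only [Finset.sum_range_one, Nat.cast_zero, zero_pow (by omega : 2 * j ≠ 0), div_zero,
    sub_zero, Nat.cast_add, Nat.cast_one] using (hasSum_nat_add_iff' 1).2 (hasSum_zeta_nat hj)

theorem stmt4 (n : ℕ) :
    (1 / (2*π) ^ (2*n+2)) *
        ∫ x in Set.Ioi (0:ℝ),
          x ^ (2*n) * Real.log (1 + Real.exp (-2*x) - 2*Real.exp (-x))
      = (-1 : ℝ) ^ (n+1) * ((bernoulli (2*n+2) : ℚ) : ℝ) / ((2*(n:ℝ)+2) * (2*(n:ℝ)+1)) := by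
  simp_rw [log_one_add_exp_neg_two_mul_sub, mul_left_comm _ (2 : ℝ), integral_const_mul]
  have hζ := (hasSum_one_div_succ_pow_even n.add_one_ne_zero).mul_left (-((2 * n)! : ℝ))
  rw [show 2 * (n + 1) = 2 * n + 2 by ring, show 2 * n + 2 - 1 = 2 * n + 1 by omega] at hζ
  rw [(hasSum_integral_pow_mul_log_one_sub_exp_neg (2 * n)).unique
    (hζ.congr_fun fun k => by ring)]
  have hfact : (((2 * n + 2)! : ℕ) : ℝ) = (2 * n + 2) * ((2 * n + 1) * (2 * n)!) := by
    rw [Nat.factorial_succ, Nat.factorial_succ]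
    push_cast
    ring
  rw [hfact, mul_pow]
  field_simp
  ring
end

section
/- For every integer n ≥ 1, the limit as t → 0⁺ of −t · R_n'(t) / R_n(t) equals 2n − 1. -/
/-!
Near `0` the remainder `R_n` is dominated by its most singular Bernoulli term
`B_{2n} / (2n(2n-1)) · t^{1-2n}`, whose coefficient is nonzero because `ζ(2n) ≠ 0`. Indeed, Binet's
function `μ(t) = log Γ(t) - (t - 1/2) log t + t - log(2π)/2` satisfies `t μ(t) → 0` and
`t² μ'(t) → 0`: write `log Γ(t) = log Γ(t + 1) - log t`, and bound `(log Γ)'` on `(0, 1]` by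
monotonicity (log-convexity of `Γ`) together with `(log Γ)'(t + 1) = (log Γ)'(t) + 1/t`.
Hence `t^{2n-1} R_n(t) → a ≠ 0` and `t^{2n} R_n'(t) → -(2n-1) a`, and the quotient
`-t R_n'(t) / R_n(t)` tends to `2n - 1`.
-/

open MeasureTheory Real Finset

open Filter Topology

noncomputable def binet (x : ℝ) : ℝ :=
  log (Gamma x) - (x - 1/2) * log x + x - (1/2) * log (2 * π)

noncomputable def stirlingSum (b : ℕ → ℝ) (n : ℕ) (x : ℝ) : ℝ :=
  ∑ k ∈ Finset.Icc 1 n, b k * x ^ (1 - 2 * (k : ℤ))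

noncomputable def stirlingCoeff (k : ℕ) : ℝ :=
  ((bernoulli (2 * k) : ℚ) : ℝ) / ((2 * (k : ℝ)) * (2 * (k : ℝ) - 1))

lemma R_eq_binet_sub_stirlingSum (n : ℕ) :
    R n = fun x => (-1 : ℝ) ^ n * (binet x - stirlingSum stirlingCoeff n x) :=
  rfl

lemma differentiableAt_log_Gamma {t : ℝ} (ht : 0 < t) : DifferentiableAt ℝ (log ∘ Gamma) t :=
  (differentiableAt_Gamma fun m => ((neg_nonpos.mpr m.cast_nonneg).trans_lt ht).ne').log
    (Gamma_pos_of_pos ht).ne'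

lemma deriv_log_Gamma_add_one {t : ℝ} (ht : 0 < t) :
    deriv (log ∘ Gamma) (t + 1) = deriv (log ∘ Gamma) t + t⁻¹ := by
  have hfeq : (fun x => (log ∘ Gamma) (x + 1)) =ᶠ[𝓝 t] fun x => (log ∘ Gamma) x + log x := by
    filter_upwards [eventually_gt_nhds ht] with x hx
    rw [Function.comp_apply, Function.comp_apply, Gamma_add_one hx.ne',
      log_mul hx.ne' (Gamma_pos_of_pos hx).ne', add_comm]
  rw [← deriv_comp_add_const, hfeq.deriv_eq,
    deriv_fun_add (differentiableAt_log_Gamma ht) (differentiableAt_log ht.ne'), deriv_log]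

lemma tendsto_mul_log_Gamma : Tendsto (fun t => t * log (Gamma t)) (𝓝[>] 0) (𝓝 0) := by
  have hΓ : ContinuousAt (fun t => log (Gamma (t + 1))) 0 :=
    (differentiableAt_log_Gamma one_pos).continuousAt.comp_of_eq
      (continuous_add_const 1).continuousAt (zero_add 1)
  have h : Tendsto (fun t => t * log (Gamma (t + 1)) - t * log t) (𝓝 0) (𝓝 0) := by
    have hc : ContinuousAt (fun t => t * log (Gamma (t + 1)) - t * log t) 0 :=
      (continuousAt_id.mul hΓ).sub continuous_mul_log.continuousAt
    simpa using hc.tendsto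
  refine (h.mono_left nhdsWithin_le_nhds).congr' ?_
  filter_upwards [self_mem_nhdsWithin] with t (ht : 0 < t)
  rw [Gamma_add_one ht.ne', log_mul ht.ne' (Gamma_pos_of_pos ht).ne']
  ring

lemma tendsto_sq_mul_deriv_log_Gamma :
    Tendsto (fun t => t ^ 2 * deriv (log ∘ Gamma) t) (𝓝[>] 0) (𝓝 0) := by
  set c := deriv (log ∘ Gamma) 1
  have hmono : MonotoneOn (deriv (log ∘ Gamma)) (Set.Ioi 0) :=
    convexOn_log_Gamma.monotoneOn_deriv fun x hx => differentiableAt_log_Gamma hx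
  have hbounds : ∀ᶠ t in 𝓝[>] 0,
      c * t ^ 2 - t ≤ t ^ 2 * deriv (log ∘ Gamma) t ∧
        t ^ 2 * deriv (log ∘ Gamma) t ≤ c * t ^ 2 := by
    filter_upwards [Ioo_mem_nhdsGT one_pos] with t ⟨ht0, ht1⟩
    have hupper : deriv (log ∘ Gamma) t ≤ c := hmono ht0 (Set.mem_Ioi.2 one_pos) ht1.le
    have hlower : c ≤ deriv (log ∘ Gamma) t + t⁻¹ :=
      deriv_log_Gamma_add_one ht0 ▸
        hmono (Set.mem_Ioi.2 one_pos) (Set.mem_Ioi.2 (by linarith)) (by linarith)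
    constructor
    · calc c * t ^ 2 - t = t ^ 2 * (c - t⁻¹) := by field_simp
        _ ≤ t ^ 2 * deriv (log ∘ Gamma) t := by gcongr; linarith
    · rw [mul_comm c]
      gcongr
  have hpoly (f : ℝ → ℝ) (hf : Continuous f) (h0 : f 0 = 0) : Tendsto f (𝓝[>] 0) (𝓝 0) :=
    (hf.tendsto' 0 0 h0).mono_left nhdsWithin_le_nhds
  exact tendsto_of_tendsto_of_tendsto_of_le_of_le'
    (hpoly (fun t => c * t ^ 2 - t) (by fun_prop) (by simp))
    (hpoly (fun t => c * t ^ 2) (by fun_prop) (by simp))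
    (hbounds.mono fun _ h => h.1) (hbounds.mono fun _ h => h.2)

lemma tendsto_mul_binet : Tendsto (fun t => t * binet t) (𝓝[>] 0) (𝓝 0) := by
  have hrest : Tendsto (fun t => -(t - 1/2) * (t * log t) + t * t - t * ((1/2) * log (2 * π)))
      (𝓝 0) (𝓝 0) := by
    have hc : Continuous fun t => -(t - 1/2) * (t * log t) + t * t - t * ((1/2) * log (2 * π)) := by
      have := continuous_mul_log
      fun_prop
    simpa using hc.tendsto 0
  simpa using (tendsto_mul_log_Gamma.add (hrest.mono_left nhdsWithin_le_nhds)).congr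
    fun t => by unfold binet; ring

lemma hasDerivAt_binet {t : ℝ} (ht : 0 < t) :
    HasDerivAt binet (deriv (log ∘ Gamma) t - (log t + (t - 1/2) * t⁻¹) + 1) t := by
  have h : HasDerivAt (fun x => (log ∘ Gamma) x - (id x - 1/2) * log x + id x - (1/2) * log (2 * π))
      (deriv (log ∘ Gamma) t - (1 * log t + (t - 1/2) * t⁻¹) + 1) t :=
    (((differentiableAt_log_Gamma ht).hasDerivAt.sub
      (((hasDerivAt_id t).sub_const (1/2)).mul (hasDerivAt_log ht.ne'))).add
      (hasDerivAt_id t)).sub_const ((1/2) * log (2 * π))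
  rw [one_mul] at h
  exact h

lemma tendsto_sq_mul_deriv_binet :
    Tendsto (fun t => t ^ 2 * deriv binet t) (𝓝[>] 0) (𝓝 0) := by
  have hrest : Tendsto (fun t => -t * (t * log t) + t / 2) (𝓝 0) (𝓝 0) := by
    have hc : Continuous fun t => -t * (t * log t) + t / 2 := by
      have := continuous_mul_log
      fun_prop
    simpa using hc.tendsto 0
  have h := tendsto_sq_mul_deriv_log_Gamma.add (hrest.mono_left nhdsWithin_le_nhds)
  rw [add_zero] at h
  refine h.congr' ?_
  filter_upwards [self_mem_nhdsWithin] with t (ht : 0 < t)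
  rw [(hasDerivAt_binet ht).deriv]
  field_simp
  ring

lemma zpow_mul_zpow_of_add_eq {t : ℝ} (ht : t ≠ 0) {a e : ℤ} {c : ℕ} (h : a + e = c) :
    t ^ a * t ^ e = t ^ c := by
  rw [← zpow_add₀ ht, h, zpow_natCast]

section stirlingSum

variable (b : ℕ → ℝ) (n : ℕ)

lemma tendsto_sum_mul_pow_two_mul_sub (hn : 1 ≤ n) :
    Tendsto (fun t : ℝ => ∑ k ∈ Finset.Icc 1 n, b k * t ^ (2 * (n - k))) (𝓝 0) (𝓝 (b n)) := by
  have hc : Continuous fun t : ℝ => ∑ k ∈ Finset.Icc 1 n, b k * t ^ (2 * (n - k)) := by fun_prop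
  convert hc.tendsto 0 using 2
  rw [Finset.sum_eq_single_of_mem n (Finset.mem_Icc.mpr ⟨hn, le_rfl⟩)]
  · simp
  · intro k hk hkn
    have := Finset.mem_Icc.mp hk
    rw [zero_pow (by omega), mul_zero]

lemma pow_mul_stirlingSum {t : ℝ} (ht : t ≠ 0) :
    t ^ (2 * n - 1) * stirlingSum b n t = ∑ k ∈ Finset.Icc 1 n, b k * t ^ (2 * (n - k)) := by
  rw [stirlingSum, Finset.mul_sum]
  refine Finset.sum_congr rfl fun k hk => ?_
  have hk := Finset.mem_Icc.mp hk
  rw [mul_left_comm, ← zpow_natCast,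
    zpow_mul_zpow_of_add_eq ht (c := 2 * (n - k)) (by push_cast; omega)]

lemma hasDerivAt_stirlingSum {t : ℝ} (ht : t ≠ 0) :
    HasDerivAt (stirlingSum b n)
      (∑ k ∈ Finset.Icc 1 n, b k * (1 - 2 * k) * t ^ (-2 * (k : ℤ))) t := by
  unfold stirlingSum
  refine HasDerivAt.fun_sum fun k _ => ?_
  have h := (hasDerivAt_zpow (1 - 2 * (k : ℤ)) t (Or.inl ht)).const_mul (b k)
  rw [show 1 - 2 * (k : ℤ) - 1 = -2 * k by ring, ← mul_assoc] at h
  push_cast at h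
  exact h

lemma pow_mul_deriv_stirlingSum {t : ℝ} (ht : t ≠ 0) :
    t ^ (2 * n) * deriv (stirlingSum b n) t =
      ∑ k ∈ Finset.Icc 1 n, b k * (1 - 2 * k) * t ^ (2 * (n - k)) := by
  rw [(hasDerivAt_stirlingSum b n ht).deriv, Finset.mul_sum]
  refine Finset.sum_congr rfl fun k hk => ?_
  have hk := Finset.mem_Icc.mp hk
  rw [mul_left_comm, ← zpow_natCast,
    zpow_mul_zpow_of_add_eq ht (c := 2 * (n - k)) (by push_cast; omega)]

end stirlingSum

lemma bernoulli_two_mul_ne_zero {k : ℕ} (hk : k ≠ 0) : bernoulli (2 * k) ≠ 0 := by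
  intro h
  have hk' : (1 : ℝ) < 2 * k := by norm_cast; omega
  apply riemannZeta_ne_zero_of_one_lt_re (s := 2 * k) (by simpa using hk')
  rw [riemannZeta_two_mul_nat hk, h]
  simp

lemma stirlingCoeff_ne_zero {k : ℕ} (hk : k ≠ 0) : stirlingCoeff k ≠ 0 := by
  have hk' : (1 : ℝ) ≤ k := by exact_mod_cast Nat.one_le_iff_ne_zero.mpr hk
  refine div_ne_zero (by exact_mod_cast bernoulli_two_mul_ne_zero hk) ?_
  exact mul_ne_zero (by linarith) (by linarith)

lemma tendsto_neg_mul_div_of_tendsto_pow_mul {l : Filter ℝ} {F G : ℝ → ℝ} {m : ℕ} {a : ℝ}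
    (ha : a ≠ 0) (hl : ∀ᶠ t in l, t ≠ 0) (hF : Tendsto (fun t => t ^ m * F t) l (𝓝 a))
    (hG : Tendsto (fun t => t ^ (m + 1) * G t) l (𝓝 (-m * a))) :
    Tendsto (fun t => -(t * G t) / F t) l (𝓝 m) := by
  have h := hG.neg.div hF ha
  rw [neg_mul, neg_neg, mul_div_cancel_right₀ _ ha] at h
  refine h.congr' ?_
  filter_upwards [hl] with t ht
  rw [Pi.div_apply, pow_succ, mul_assoc, ← mul_neg, mul_div_mul_left _ _ (pow_ne_zero m ht)]

lemma tendsto_pow_mul_R {n : ℕ} (hn : 1 ≤ n) :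
    Tendsto (fun t => t ^ (2 * n - 1) * R n t) (𝓝[>] 0)
      (𝓝 ((-1) ^ n * -stirlingCoeff n)) := by
  have hbinet : Tendsto (fun t => t ^ (2 * n - 2) * (t * binet t)) (𝓝[>] 0) (𝓝 0) := by
    simpa using (((continuous_pow _).tendsto 0).mono_left nhdsWithin_le_nhds).mul tendsto_mul_binet
  have hsum : Tendsto (fun t => t ^ (2 * n - 1) * stirlingSum stirlingCoeff n t) (𝓝[>] 0)
      (𝓝 (stirlingCoeff n)) := by
    refine ((tendsto_sum_mul_pow_two_mul_sub _ n hn).mono_left nhdsWithin_le_nhds).congr' ?_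
    filter_upwards [self_mem_nhdsWithin] with t (ht : 0 < t)
    rw [pow_mul_stirlingSum _ _ ht.ne']
  have h := (hbinet.sub hsum).const_mul ((-1 : ℝ) ^ n)
  rw [zero_sub] at h
  refine h.congr fun t => ?_
  rw [R_eq_binet_sub_stirlingSum, show 2 * n - 1 = 2 * n - 2 + 1 by omega, pow_succ]
  ring

lemma tendsto_pow_mul_deriv_R {n : ℕ} (hn : 1 ≤ n) :
    Tendsto (fun t => t ^ (2 * n) * deriv (R n) t) (𝓝[>] 0)
      (𝓝 ((-1) ^ n * -(stirlingCoeff n * (1 - 2 * n)))) := by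
  have hbinet : Tendsto (fun t => t ^ (2 * n - 2) * (t ^ 2 * deriv binet t)) (𝓝[>] 0) (𝓝 0) := by
    simpa using (((continuous_pow _).tendsto 0).mono_left nhdsWithin_le_nhds).mul
      tendsto_sq_mul_deriv_binet
  have hsum : Tendsto (fun t => t ^ (2 * n) * deriv (stirlingSum stirlingCoeff n) t) (𝓝[>] 0)
      (𝓝 (stirlingCoeff n * (1 - 2 * n))) := by
    refine ((tendsto_sum_mul_pow_two_mul_sub (fun k => stirlingCoeff k * (1 - 2 * k)) n
      hn).mono_left nhdsWithin_le_nhds).congr' ?_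
    filter_upwards [self_mem_nhdsWithin] with t (ht : 0 < t)
    rw [pow_mul_deriv_stirlingSum _ _ ht.ne']
  have h := (hbinet.sub hsum).const_mul ((-1 : ℝ) ^ n)
  rw [zero_sub] at h
  refine h.congr' ?_
  filter_upwards [self_mem_nhdsWithin] with t (ht : 0 < t)
  have hR : HasDerivAt (R n)
      ((-1) ^ n * (deriv binet t - deriv (stirlingSum stirlingCoeff n) t)) t :=
    ((hasDerivAt_binet ht).differentiableAt.hasDerivAt.sub
      (hasDerivAt_stirlingSum _ _ ht.ne').differentiableAt.hasDerivAt).const_mul _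
  have hpow : t ^ (2 * n) = t ^ (2 * n - 2) * t ^ 2 := by
    rw [← pow_add, Nat.sub_add_cancel (by omega)]
  rw [hR.deriv, hpow]
  ring

theorem stmt6 (n : ℕ) (hn : 1 ≤ n) :
    Filter.Tendsto (fun t : ℝ => -(t * deriv (R n) t) / R n t)
      (nhdsWithin 0 (Set.Ioi 0)) (nhds (2*(n:ℝ) - 1)) := by
  have hm : ((2 * n - 1 : ℕ) : ℝ) = 2 * (n : ℝ) - 1 := by
    rw [Nat.cast_sub (by omega)]
    push_cast
    ring
  rw [← hm]
  refine tendsto_neg_mul_div_of_tendsto_pow_mul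
    (mul_ne_zero (pow_ne_zero _ (by norm_num)) (neg_ne_zero.mpr (stirlingCoeff_ne_zero (by omega))))
    (eventually_mem_nhdsWithin.mono fun t (ht : 0 < t) => ht.ne') (tendsto_pow_mul_R hn) ?_
  rw [show 2 * n - 1 + 1 = 2 * n by omega, hm]
  convert tendsto_pow_mul_deriv_R hn using 2
  ring
end

section
/- For every integer m ≥ 3, the function x ↦ (-1)^m x^{m} R_0^{(m)}(x) is NOT completely monotonic on (0,∞). -/
open MeasureTheory Real Finset

section Aux
open Filter Set

open MeasureTheory Real Finset Filter Set

-- A: Gamma smoothness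
lemma contDiffAt_realGamma {x : ℝ} (hx : 0 < x) : ContDiffAt ℝ (⊤ : ℕ∞) Real.Gamma x := by
  have hs : IsOpen {s : ℂ | 0 < s.re} := isOpen_lt continuous_const Complex.continuous_re
  have hdiff : DifferentiableOn ℂ Complex.Gamma {s : ℂ | 0 < s.re} := by
    intro s hs'
    refine (Complex.differentiableAt_Gamma s ?_).differentiableWithinAt
    intro n hn
    have : (0:ℝ) < s.re := hs'
    rw [hn] at this
    simp at this
    have : (0:ℝ) ≤ (n:ℝ) := Nat.cast_nonneg n
    linarith
  have han : AnalyticAt ℂ Complex.Gamma (x : ℂ) := by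
    have := hdiff.analyticAt (hs.mem_nhds (by simpa using hx : (x:ℂ) ∈ {s : ℂ | 0 < s.re}))
    exact this
  have hC : ContDiffAt ℝ (⊤ : ℕ∞) Complex.Gamma (x : ℂ) :=
    (han.contDiffAt.of_le le_top).restrict_scalars ℝ
  have heq : Real.Gamma = fun y : ℝ => (Complex.Gamma (y : ℂ)).re := by
    funext y; rw [Complex.Gamma_ofReal]; simp
  rw [heq]
  exact Complex.reCLM.contDiff.contDiffAt.comp x (hC.comp x (Complex.ofRealCLM.contDiff.contDiffAt))

-- R 0 explicit
lemma R0_eq (x : ℝ) : R 0 x = Real.log (Real.Gamma x) - (x - 1/2) * Real.log x + x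
    - (1/2) * Real.log (2 * π) := by
  simp [R]

-- h
noncomputable def hfun (x : ℝ) : ℝ := (x + 1/2) * (Real.log (x+1) - Real.log x) - 1

lemma contDiffAt_hfun {x : ℝ} (hx : 0 < x) : ContDiffAt ℝ (⊤ : ℕ∞) hfun x := by
  unfold hfun
  have h1 : ContDiffAt ℝ (⊤ : ℕ∞) (fun y : ℝ => Real.log (y+1)) x :=
    (Real.contDiffAt_log.mpr (by linarith)).comp x (contDiffAt_id.add contDiffAt_const)
  have h2 : ContDiffAt ℝ (⊤ : ℕ∞) Real.log x := Real.contDiffAt_log.mpr hx.ne'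
  exact (((contDiffAt_id.add contDiffAt_const).mul (h1.sub h2)).sub contDiffAt_const)

lemma contDiffOn_R0 : ContDiffOn ℝ (⊤ : ℕ∞) (R 0) (Set.Ioi 0) := by
  intro x hx
  have hx' : (0:ℝ) < x := hx
  have hG : ContDiffAt ℝ (⊤ : ℕ∞) (fun y => Real.log (Real.Gamma y)) x := by
    exact (Real.contDiffAt_log.mpr (Real.Gamma_pos_of_pos hx').ne').comp x (contDiffAt_realGamma hx')
  have hL : ContDiffAt ℝ (⊤ : ℕ∞) Real.log x := Real.contDiffAt_log.mpr hx'.ne'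
  have : ContDiffAt ℝ (⊤ : ℕ∞) (R 0) x := by
    have : ContDiffAt ℝ (⊤ : ℕ∞) (fun y : ℝ => Real.log (Real.Gamma y) - (y - 1/2) * Real.log y + y
        - (1/2) * Real.log (2 * π)) x := by
      exact ((hG.sub ((contDiffAt_id.sub contDiffAt_const).mul hL)).add contDiffAt_id).sub
        contDiffAt_const
    exact this.congr_of_eventuallyEq (Filter.Eventually.of_forall fun y => (R0_eq y))
  exact this.contDiffWithinAt

-- C: iterated derivative smoothness on open set
lemma contDiffOn_iteratedDeriv {f : ℝ → ℝ} {s : Set ℝ} (hs : IsOpen s)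
    (hf : ContDiffOn ℝ (⊤ : ℕ∞) f s) (k : ℕ) :
    ContDiffOn ℝ (⊤ : ℕ∞) (iteratedDeriv k f) s := by
  induction k with
  | zero => simpa [iteratedDeriv_zero] using hf
  | succ k ih =>
      rw [iteratedDeriv_succ]
      exact ((contDiffOn_infty_iff_deriv_of_isOpen hs).mp ih).2

-- D: HasDerivAt for iterated derivatives
lemma hasDerivAt_iteratedDeriv {f : ℝ → ℝ} {s : Set ℝ} (hs : IsOpen s)
    (hf : ContDiffOn ℝ (⊤ : ℕ∞) f s) (k : ℕ) {x : ℝ} (hx : x ∈ s) :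
    HasDerivAt (iteratedDeriv k f) (iteratedDeriv (k+1) f x) x := by
  have h1 : DifferentiableOn ℝ (iteratedDeriv k f) s :=
    (contDiffOn_iteratedDeriv hs hf k).differentiableOn (by norm_num)
  have h2 : DifferentiableAt ℝ (iteratedDeriv k f) x :=
    (h1 x hx).differentiableAt (hs.mem_nhds hx)
  rw [iteratedDeriv_succ]
  exact h2.hasDerivAt

-- F: functional equation
lemma R0_funeq {x : ℝ} (hx : 0 < x) : R 0 x = R 0 (x+1) + hfun x := by
  rw [R0_eq, R0_eq, hfun]
  have hG : Real.Gamma (x+1) = x * Real.Gamma x := Real.Gamma_add_one hx.ne'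
  rw [hG, Real.log_mul hx.ne' (Real.Gamma_pos_of_pos hx).ne']
  ring

-- transfer to iterated derivatives
lemma iteratedDeriv_R0_transfer (k : ℕ) : ∀ x : ℝ, 0 < x →
    iteratedDeriv k (R 0) x = iteratedDeriv k (R 0) (x+1) + iteratedDeriv k hfun x := by
  induction k with
  | zero =>
      intro x hx
      simpa [iteratedDeriv_zero] using R0_funeq hx
  | succ k ih =>
      intro x hx
      have hev : iteratedDeriv k (R 0) =ᶠ[nhds x]
          (fun y => iteratedDeriv k (R 0) (y+1) + iteratedDeriv k hfun y) := by
        filter_upwards [isOpen_Ioi.mem_nhds (show x ∈ Set.Ioi (0:ℝ) from hx)] with y hy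
        exact ih y hy
      have hhsm : ContDiffOn ℝ (⊤ : ℕ∞) hfun (Set.Ioi 0) :=
        fun y hy => (contDiffAt_hfun hy).contDiffWithinAt
      have hd1 : HasDerivAt (fun y : ℝ => iteratedDeriv k (R 0) (y+1))
          (iteratedDeriv (k+1) (R 0) (x+1)) x := by
        have := hasDerivAt_iteratedDeriv isOpen_Ioi contDiffOn_R0 k
          (show x+1 ∈ Set.Ioi (0:ℝ) by simp; linarith)
        simpa using this.comp_add_const x 1
      have hd2 : HasDerivAt (iteratedDeriv k hfun) (iteratedDeriv (k+1) hfun x) x :=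
        hasDerivAt_iteratedDeriv isOpen_Ioi hhsm k hx
      rw [iteratedDeriv_succ, hev.deriv_eq, (hd1.fun_add hd2).deriv, iteratedDeriv_succ]

-- ===== explicit derivative machinery for hfun =====
noncomputable def K (j : ℕ) (x : ℝ) : ℝ :=
  -(Nat.factorial (j+1) : ℝ) * (x + 1/2) * (1/(x+1)^(j+2) - 1/x^(j+2))
    + ((j:ℝ)+2) * (Nat.factorial j : ℝ) * (1/(x+1)^(j+1) - 1/x^(j+1))

lemma hasDerivAt_hfun {x : ℝ} (hx : 0 < x) :
    HasDerivAt hfun ((Real.log (x+1) - Real.log x) + (x + 1/2) * (1/(x+1) - 1/x)) x := by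
  have h1 : HasDerivAt (fun y : ℝ => Real.log (y+1)) (1/(x+1)) x := by
    simpa [one_div] using ((Real.hasDerivAt_log (by linarith : x+1 ≠ 0)).comp_add_const x 1)
  have h2 : HasDerivAt Real.log (1/x) x := by
    simpa [one_div] using Real.hasDerivAt_log hx.ne'
  have h3 : HasDerivAt (fun y : ℝ => y + 1/2) 1 x := by
    simpa using (hasDerivAt_id x).add_const (1/2)
  have := (h3.fun_mul (h1.fun_sub h2)).sub_const 1
  refine this.congr_deriv ?_
  ring

lemma hasDerivAt_invpow {x c : ℝ} (p : ℕ) (hx : x + c ≠ 0) :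
    HasDerivAt (fun y : ℝ => 1/(y+c)^p) (-(p:ℝ) * (x+c)^(p-1) / ((x+c)^p)^2) x := by
  have h1 : HasDerivAt (fun y : ℝ => (y+c)^p) ((p:ℝ) * (x+c)^(p-1)) x := by
    simpa using (hasDerivAt_pow p (x+c)).comp_add_const x c
  have := h1.fun_inv (pow_ne_zero p hx)
  simpa [one_div, neg_div] using this

lemma hasDerivAt_invpow' {x : ℝ} (p : ℕ) (hx : x ≠ 0) :
    HasDerivAt (fun y : ℝ => 1/y^p) (-(p:ℝ) * x^(p-1) / (x^p)^2) x := by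
  have := hasDerivAt_invpow (x := x) (c := 0) p (by simpa using hx)
  simp only [add_zero] at this
  exact this

set_option maxHeartbeats 2000000 in
lemma hasDerivAt_K {x : ℝ} (hx : 0 < x) (j : ℕ) : HasDerivAt (K j) (-(K (j+1) x)) x := by
  have hx1 : x + 1 ≠ 0 := by linarith
  have c1 := hasDerivAt_invpow (x := x) (c := 1) (j+2) hx1
  have c2 := hasDerivAt_invpow' (x := x) (j+2) hx.ne'
  have c3 := hasDerivAt_invpow (x := x) (c := 1) (j+1) hx1
  have c4 := hasDerivAt_invpow' (x := x) (j+1) hx.ne'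
  have h3 : HasDerivAt (fun y : ℝ => y + 1/2) 1 x := by
    simpa using (hasDerivAt_id x).add_const (1/2)
  have main := ((h3.fun_mul (c1.fun_sub c2)).const_mul (-(Nat.factorial (j+1) : ℝ))).fun_add
    ((c3.fun_sub c4).const_mul (((j:ℝ)+2) * (Nat.factorial j : ℝ)))
  have hKeq : K j = fun y : ℝ => (-(Nat.factorial (j+1) : ℝ)) *
      ((y + 1/2) * (1/(y+1)^(j+2) - 1/y^(j+2)))
      + (((j:ℝ)+2) * (Nat.factorial j : ℝ)) * (1/(y+1)^(j+1) - 1/y^(j+1)) := by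
    funext y; unfold K; ring
  rw [hKeq]
  refine main.congr_deriv ?_
  symm
  unfold K
  simp only [show j+2-1 = j+1 from rfl, show j+1-1 = j from rfl,
    show j+1+1 = j+2 from rfl, show j+1+2 = j+3 from rfl]
  have hf1 : (Nat.factorial (j+2) : ℝ) = ((j:ℝ)+2) * (Nat.factorial (j+1) : ℝ) := by
    rw [show j+2 = (j+1)+1 from rfl, Nat.factorial_succ]; push_cast; ring
  have hf2 : (Nat.factorial (j+1) : ℝ) = ((j:ℝ)+1) * (Nat.factorial j : ℝ) := by
    rw [Nat.factorial_succ]; push_cast; ring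
  rw [hf1, hf2]
  have hp1 : (x+1)^(j+2) ≠ 0 := pow_ne_zero _ hx1
  have hp2 : (x:ℝ)^(j+2) ≠ 0 := pow_ne_zero _ hx.ne'
  have hp3 : (x+1)^(j+1) ≠ 0 := pow_ne_zero _ hx1
  have hp4 : (x:ℝ)^(j+1) ≠ 0 := pow_ne_zero _ hx.ne'
  push_cast
  field_simp
  ring

lemma iteratedDeriv2_hfun {x : ℝ} (hx : 0 < x) : iteratedDeriv 2 hfun x = K 0 x := by
  have hev : deriv hfun =ᶠ[nhds x]
      (fun y : ℝ => (Real.log (y+1) - Real.log y) + (y + 1/2) * (1/(y+1) - 1/y)) := by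
    filter_upwards [isOpen_Ioi.mem_nhds (show x ∈ Set.Ioi (0:ℝ) from hx)] with y hy
    exact (hasDerivAt_hfun hy).deriv
  have hx1 : x + 1 ≠ 0 := by linarith
  have l1 : HasDerivAt (fun y : ℝ => Real.log (y+1)) (1/(x+1)) x := by
    simpa [one_div] using ((Real.hasDerivAt_log hx1).comp_add_const x 1)
  have l2 : HasDerivAt Real.log (1/x) x := by
    simpa [one_div] using Real.hasDerivAt_log hx.ne'
  have c1 := hasDerivAt_invpow (x := x) (c := 1) 1 hx1
  have c2 := hasDerivAt_invpow' (x := x) 1 hx.ne'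
  have h3 : HasDerivAt (fun y : ℝ => y + 1/2) 1 x := by
    simpa using (hasDerivAt_id x).add_const (1/2)
  have main := (l1.fun_sub l2).fun_add (h3.fun_mul (c1.fun_sub c2))
  simp only [pow_one] at main
  rw [show (2:ℕ) = 1 + 1 from rfl, iteratedDeriv_succ, iteratedDeriv_one, hev.deriv_eq,
    main.deriv]
  unfold K
  norm_num
  field_simp
  ring

lemma iteratedDeriv_hfun_eq (n : ℕ) : ∀ x : ℝ, 0 < x →
    iteratedDeriv (n+2) hfun x = (-1:ℝ)^n * K n x := by
  induction n with
  | zero => intro x hx; simpa using iteratedDeriv2_hfun hx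
  | succ n ih =>
      intro x hx
      have hev : iteratedDeriv (n+2) hfun =ᶠ[nhds x] (fun y => (-1:ℝ)^n * K n y) := by
        filter_upwards [isOpen_Ioi.mem_nhds (show x ∈ Set.Ioi (0:ℝ) from hx)] with y hy
        exact ih y hy
      have hd : HasDerivAt (fun y => (-1:ℝ)^n * K n y) ((-1:ℝ)^n * (-(K (n+1) x))) x :=
        (hasDerivAt_K hx n).const_mul _
      rw [show n+1+2 = (n+2)+1 from rfl, iteratedDeriv_succ, hev.deriv_eq, hd.deriv]
      ring

-- ===== psi identities =====
noncomputable def Kp (j : ℕ) (x : ℝ) : ℝ :=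
  -(Nat.factorial (j+1) : ℝ) * (x + 1/2) * (1/(x+1)^(j+2))
    + ((j:ℝ)+2) * (Nat.factorial j : ℝ) * (1/(x+1)^(j+1))

lemma fact_rw (k : ℕ) : (Nat.factorial (k+1) : ℝ) = ((k:ℝ)+1) * (Nat.factorial k : ℝ) := by
  rw [Nat.factorial_succ]; push_cast; ring

lemma psi1 (n : ℕ) {x : ℝ} (hx : 0 < x) :
    ((n:ℝ)+3) * x^(n+2) * K (n+1) x - x^(n+3) * K (n+2) x
      = ((n:ℝ)+3) * x^(n+2) * Kp (n+1) x - x^(n+3) * Kp (n+2) x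
        - (Nat.factorial (n+1) : ℝ) := by
  have hx1 : x + 1 ≠ 0 := by linarith
  unfold K Kp
  simp only [show n+2 = n+1+1 from rfl, show n+3 = n+1+1+1 from rfl, Nat.factorial_succ]
  push_cast
  field_simp
  ring

lemma psi2 (n : ℕ) {x : ℝ} (hx : 0 < x) :
    ((n:ℝ)+3) * ((n:ℝ)+2) * x^(n+1) * K (n+1) x - 2*((n:ℝ)+3) * x^(n+2) * K (n+2) x
        + x^(n+3) * K (n+3) x
      = ((n:ℝ)+3) * ((n:ℝ)+2) * x^(n+1) * Kp (n+1) x - 2*((n:ℝ)+3) * x^(n+2) * Kp (n+2) x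
        + x^(n+3) * Kp (n+3) x := by
  have hx1 : x + 1 ≠ 0 := by linarith
  unfold K Kp
  simp only [show n+2 = n+1+1 from rfl, show n+3 = n+1+1+1 from rfl, Nat.factorial_succ]
  push_cast
  field_simp
  ring

-- ===== derivatives of F =====

lemma mem_Ioi_of_pos {x : ℝ} (hx : 0 < x) : x ∈ Set.Ioi (0:ℝ) := hx

lemma hD_R0 (k : ℕ) {x : ℝ} (hx : 0 < x) :
    HasDerivAt (iteratedDeriv k (R 0)) (iteratedDeriv (k+1) (R 0) x) x :=
  hasDerivAt_iteratedDeriv isOpen_Ioi contDiffOn_R0 k (mem_Ioi_of_pos hx)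

lemma f1_eq (n : ℕ) {x : ℝ} (hx : 0 < x) :
    iteratedDeriv 1 (fun y : ℝ => (-1:ℝ)^(n+3) * y^(n+3) * iteratedDeriv (n+3) (R 0) y) x
      = (-1:ℝ)^(n+3) * (((n:ℝ)+3) * x^(n+2) * iteratedDeriv (n+3) (R 0) x
          + x^(n+3) * iteratedDeriv (n+4) (R 0) x) := by
  rw [iteratedDeriv_one]
  have hD := hD_R0 (n+3) hx
  have main := ((hasDerivAt_pow (n+3) x).fun_mul hD).const_mul ((-1:ℝ)^(n+3))
  have hfe : (fun y : ℝ => (-1:ℝ)^(n+3) * y^(n+3) * iteratedDeriv (n+3) (R 0) y)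
      = fun y : ℝ => (-1:ℝ)^(n+3) * (y^(n+3) * iteratedDeriv (n+3) (R 0) y) := by
    funext y; ring
  rw [hfe, main.deriv]
  simp only [show n+3-1 = n+2 from rfl, show n+3+1 = n+4 from rfl]
  push_cast; ring

lemma f2_eq (n : ℕ) {x : ℝ} (hx : 0 < x) :
    iteratedDeriv 2 (fun y : ℝ => (-1:ℝ)^(n+3) * y^(n+3) * iteratedDeriv (n+3) (R 0) y) x
      = (-1:ℝ)^(n+3) * (((n:ℝ)+3) * ((n:ℝ)+2) * x^(n+1) * iteratedDeriv (n+3) (R 0) x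
          + 2*((n:ℝ)+3) * x^(n+2) * iteratedDeriv (n+4) (R 0) x
          + x^(n+3) * iteratedDeriv (n+5) (R 0) x) := by
  have hev : iteratedDeriv 1 (fun y : ℝ => (-1:ℝ)^(n+3) * y^(n+3) * iteratedDeriv (n+3) (R 0) y)
      =ᶠ[nhds x] (fun y => (-1:ℝ)^(n+3) * ((((n:ℝ)+3) * (y^(n+2) * iteratedDeriv (n+3) (R 0) y))
        + y^(n+3) * iteratedDeriv (n+4) (R 0) y)) := by
    filter_upwards [isOpen_Ioi.mem_nhds (mem_Ioi_of_pos hx)] with y hy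
    rw [f1_eq n hy]; ring
  have hD3 := hD_R0 (n+3) hx
  have hD4 := hD_R0 (n+4) hx
  have main := ((((hasDerivAt_pow (n+2) x).fun_mul hD3).const_mul ((n:ℝ)+3)).fun_add
    ((hasDerivAt_pow (n+3) x).fun_mul hD4)).const_mul ((-1:ℝ)^(n+3))
  nth_rw 1 [show (2:ℕ) = 1+1 from rfl]
  rw [iteratedDeriv_succ, hev.deriv_eq, main.deriv]
  simp only [show n+2-1 = n+1 from rfl, show n+3-1 = n+2 from rfl, show n+3+1 = n+4 from rfl,
    show n+4+1 = n+5 from rfl]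
  push_cast; ring

-- ===== sign lemmas =====
lemma sgn1 (n : ℕ) : (-1:ℝ)^(n+3) * (-1:ℝ)^(n+1) = 1 := by
  rw [← pow_add]; exact Even.neg_one_pow ⟨n+2, by omega⟩

lemma sgn2 (n : ℕ) : (-1:ℝ)^(n+3) * (-1:ℝ)^(n+2) = -1 := by
  rw [← pow_add]; exact Odd.neg_one_pow ⟨n+2, by omega⟩

lemma sgn3 (n : ℕ) : (-1:ℝ)^(n+3) * (-1:ℝ)^(n+3) = 1 := by
  rw [← pow_add]; exact Even.neg_one_pow ⟨n+3, by omega⟩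

-- ===== transfer for the specific orders =====
lemma e_transfer (j : ℕ) {x : ℝ} (hx : 0 < x) :
    iteratedDeriv (j+3) (R 0) x
      = iteratedDeriv (j+3) (R 0) (x+1) + (-1:ℝ)^(j+1) * K (j+1) x := by
  have := iteratedDeriv_R0_transfer (j+3) x hx
  rw [this, show j+3 = (j+1)+2 from rfl, iteratedDeriv_hfun_eq (j+1) x hx]

-- ===== expression for iteratedDeriv 1 near 0 =====
lemma w_eq (n : ℕ) {x : ℝ} (hx : 0 < x) :
    iteratedDeriv 1 (fun y : ℝ => (-1:ℝ)^(n+3) * y^(n+3) * iteratedDeriv (n+3) (R 0) y) x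
      = (-1:ℝ)^(n+3) * (((n:ℝ)+3) * x^(n+2) * iteratedDeriv (n+3) (R 0) (x+1)
          + x^(n+3) * iteratedDeriv (n+4) (R 0) (x+1))
        + (((n:ℝ)+3) * x^(n+2) * Kp (n+1) x - x^(n+3) * Kp (n+2) x)
        - (Nat.factorial (n+1) : ℝ) := by
  have e3 := e_transfer n hx
  have e4 := e_transfer (n+1) hx
  rw [show n+1+3 = n+4 from rfl, show n+1+1 = n+2 from rfl] at e4
  rw [f1_eq n hx, e3, e4]
  linear_combination (((n:ℝ)+3) * x^(n+2) * K (n+1) x) * sgn1 n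
    + (x^(n+3) * K (n+2) x) * sgn2 n + psi1 n hx

-- ===== expression for iteratedDeriv 2 near 0 =====
lemma u_eq (n : ℕ) {x : ℝ} (hx : 0 < x) :
    iteratedDeriv 2 (fun y : ℝ => (-1:ℝ)^(n+3) * y^(n+3) * iteratedDeriv (n+3) (R 0) y) x
      = (-1:ℝ)^(n+3) * (((n:ℝ)+3) * ((n:ℝ)+2) * x^(n+1) * iteratedDeriv (n+3) (R 0) (x+1)
          + 2*((n:ℝ)+3) * x^(n+2) * iteratedDeriv (n+4) (R 0) (x+1)
          + x^(n+3) * iteratedDeriv (n+5) (R 0) (x+1))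
        + (((n:ℝ)+3) * ((n:ℝ)+2) * x^(n+1) * Kp (n+1) x
            - 2*((n:ℝ)+3) * x^(n+2) * Kp (n+2) x + x^(n+3) * Kp (n+3) x) := by
  have e3 := e_transfer n hx
  have e4 := e_transfer (n+1) hx
  have e5 := e_transfer (n+2) hx
  rw [show n+1+3 = n+4 from rfl, show n+1+1 = n+2 from rfl] at e4
  rw [show n+2+3 = n+5 from rfl, show n+2+1 = n+3 from rfl] at e5
  rw [f2_eq n hx, e3, e4, e5]
  linear_combination (((n:ℝ)+3) * ((n:ℝ)+2) * x^(n+1) * K (n+1) x) * sgn1 n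
    + (2*((n:ℝ)+3) * x^(n+2) * K (n+2) x) * sgn2 n
    + (x^(n+3) * K (n+3) x) * sgn3 n + psi2 n hx

-- ===== continuity of Kp at 0 =====
lemma continuousAt_Kp (j : ℕ) : ContinuousAt (Kp j) 0 := by
  unfold Kp
  have h2 : ContinuousAt (fun x : ℝ => 1/(x+1)^(j+2)) 0 := by
    apply ContinuousAt.div continuousAt_const
    · exact ((continuous_id.add continuous_const).pow _).continuousAt
    · norm_num
  have h1 : ContinuousAt (fun x : ℝ => 1/(x+1)^(j+1)) 0 := by
    apply ContinuousAt.div continuousAt_const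
    · exact ((continuous_id.add continuous_const).pow _).continuousAt
    · norm_num
  exact ((continuousAt_const.mul (continuous_id.add continuous_const).continuousAt).mul h2).add
    (continuousAt_const.mul h1)

lemma continuousAt_D_shift (k : ℕ) : ContinuousAt (fun x : ℝ => iteratedDeriv k (R 0) (x+1)) 0 := by
  have h := (hD_R0 k (x := 0+1) (by norm_num)).continuousAt
  exact ContinuousAt.comp (f := fun x : ℝ => x + 1) h (by fun_prop)

lemma lim_w (n : ℕ) :
    Filter.Tendsto (iteratedDeriv 1 (fun y : ℝ => (-1:ℝ)^(n+3) * y^(n+3)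
        * iteratedDeriv (n+3) (R 0) y))
      (nhdsWithin 0 (Set.Ioi 0)) (nhds (-(Nat.factorial (n+1) : ℝ))) := by
  set Φ : ℝ → ℝ := fun x => (-1:ℝ)^(n+3) * (((n:ℝ)+3) * x^(n+2) * iteratedDeriv (n+3) (R 0) (x+1)
          + x^(n+3) * iteratedDeriv (n+4) (R 0) (x+1))
        + (((n:ℝ)+3) * x^(n+2) * Kp (n+1) x - x^(n+3) * Kp (n+2) x)
        - (Nat.factorial (n+1) : ℝ) with hΦ
  have hcont : ContinuousAt Φ 0 := by
    rw [hΦ]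
    exact ((continuousAt_const.mul (((continuousAt_const.mul
        (continuous_pow (n+2)).continuousAt).mul (continuousAt_D_shift (n+3))).add
        ((continuous_pow (n+3)).continuousAt.mul (continuousAt_D_shift (n+4))))).add
      (((continuousAt_const.mul (continuous_pow (n+2)).continuousAt).mul
        (continuousAt_Kp (n+1))).sub
        ((continuous_pow (n+3)).continuousAt.mul (continuousAt_Kp (n+2))))).sub continuousAt_const
  have hval : Φ 0 = -(Nat.factorial (n+1) : ℝ) := by
    rw [hΦ]
    simp [zero_pow (show n+2 ≠ 0 by omega), zero_pow (show n+3 ≠ 0 by omega)]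
  have htd : Filter.Tendsto Φ (nhdsWithin 0 (Set.Ioi 0)) (nhds (-(Nat.factorial (n+1) : ℝ))) := by
    rw [← hval]
    exact hcont.continuousWithinAt.tendsto
  refine htd.congr' ?_
  filter_upwards [self_mem_nhdsWithin] with x hx
  exact (w_eq n hx).symm

lemma lim_u (n : ℕ) :
    Filter.Tendsto (iteratedDeriv 2 (fun y : ℝ => (-1:ℝ)^(n+3) * y^(n+3)
        * iteratedDeriv (n+3) (R 0) y))
      (nhdsWithin 0 (Set.Ioi 0)) (nhds 0) := by
  set Φ : ℝ → ℝ := fun x => (-1:ℝ)^(n+3) * (((n:ℝ)+3) * ((n:ℝ)+2) * x^(n+1)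
          * iteratedDeriv (n+3) (R 0) (x+1)
          + 2*((n:ℝ)+3) * x^(n+2) * iteratedDeriv (n+4) (R 0) (x+1)
          + x^(n+3) * iteratedDeriv (n+5) (R 0) (x+1))
        + (((n:ℝ)+3) * ((n:ℝ)+2) * x^(n+1) * Kp (n+1) x
            - 2*((n:ℝ)+3) * x^(n+2) * Kp (n+2) x + x^(n+3) * Kp (n+3) x) with hΦ
  have hcont : ContinuousAt Φ 0 := by
    rw [hΦ]
    exact (continuousAt_const.mul ((((continuousAt_const.mul
        (continuous_pow (n+1)).continuousAt).mul (continuousAt_D_shift (n+3))).add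
        ((continuousAt_const.mul (continuous_pow (n+2)).continuousAt).mul
          (continuousAt_D_shift (n+4)))).add
        ((continuous_pow (n+3)).continuousAt.mul (continuousAt_D_shift (n+5))))).add
      ((((continuousAt_const.mul (continuous_pow (n+1)).continuousAt).mul
        (continuousAt_Kp (n+1))).sub
        ((continuousAt_const.mul (continuous_pow (n+2)).continuousAt).mul
          (continuousAt_Kp (n+2)))).add
        ((continuous_pow (n+3)).continuousAt.mul (continuousAt_Kp (n+3))))
  have hval : Φ 0 = 0 := by
    rw [hΦ]
    simp [zero_pow (show n+1 ≠ 0 by omega), zero_pow (show n+2 ≠ 0 by omega),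
      zero_pow (show n+3 ≠ 0 by omega)]
  have htd : Filter.Tendsto Φ (nhdsWithin 0 (Set.Ioi 0)) (nhds 0) := by
    have := hcont.continuousWithinAt.tendsto (s := Set.Ioi 0)
    rwa [hval] at this
  refine htd.congr' ?_
  filter_upwards [self_mem_nhdsWithin] with x hx
  exact (u_eq n hx).symm


end Aux

theorem stmt8 (m : ℕ) (hm : 3 ≤ m) :
    ¬ CompletelyMonotonicOn
        (fun x : ℝ => (-1 : ℝ) ^ m * x ^ m * iteratedDeriv m (R 0) x) := by
  intro hCM
  obtain ⟨n, rfl⟩ : ∃ n, m = n + 3 := ⟨m - 3, by omega⟩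
  obtain ⟨hsm, hsign⟩ := hCM
  set F : ℝ → ℝ := fun x : ℝ => (-1 : ℝ) ^ (n+3) * x ^ (n+3) * iteratedDeriv (n+3) (R 0) x
    with hFdef
  have hFsm : ContDiffOn ℝ (⊤:ℕ∞) F (Set.Ioi 0) := hsm.of_le (by simp)
  have hDF : ∀ k : ℕ, ∀ x ∈ Set.Ioi (0:ℝ),
      HasDerivAt (iteratedDeriv k F) (iteratedDeriv (k+1) F x) x :=
    fun k x hx => hasDerivAt_iteratedDeriv isOpen_Ioi hFsm k hx
  -- u = second derivative is antitone with limit 0, hence ≡ 0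
  have hu_cont : ContinuousOn (iteratedDeriv 2 F) (Set.Ioi 0) :=
    fun x hx => ((hDF 2 x hx).differentiableAt.continuousAt).continuousWithinAt
  have hu_diff : DifferentiableOn ℝ (iteratedDeriv 2 F) (interior (Set.Ioi 0)) := by
    rw [interior_Ioi]
    exact fun x hx => (hDF 2 x hx).differentiableAt.differentiableWithinAt
  have hu_anti : AntitoneOn (iteratedDeriv 2 F) (Set.Ioi 0) := by
    apply antitoneOn_of_deriv_nonpos (convex_Ioi 0) hu_cont hu_diff
    intro x hx
    rw [interior_Ioi] at hx
    rw [(hDF 2 x hx).deriv]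
    have h3 := hsign 3 x hx
    norm_num at h3
    linarith
  have hu_nonpos : ∀ y ∈ Set.Ioi (0:ℝ), iteratedDeriv 2 F y ≤ 0 := by
    intro y hy
    have hev : ∀ᶠ x in nhdsWithin 0 (Set.Ioi 0), iteratedDeriv 2 F y ≤ iteratedDeriv 2 F x := by
      filter_upwards [Ioo_mem_nhdsGT_of_mem (Set.left_mem_Ico.mpr hy)] with x hx
      exact hu_anti hx.1 hy hx.2.le
    exact ge_of_tendsto (lim_u n) hev
  have hu_zero : ∀ y ∈ Set.Ioi (0:ℝ), iteratedDeriv 2 F y = 0 := by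
    intro y hy
    refine le_antisymm (hu_nonpos y hy) ?_
    have h2 := hsign 2 y hy
    norm_num at h2
    linarith
  -- w = first derivative is constant, equal to its limit -(n+1)!
  have hw_cont : ContinuousOn (iteratedDeriv 1 F) (Set.Ioi 0) :=
    fun x hx => ((hDF 1 x hx).differentiableAt.continuousAt).continuousWithinAt
  have hw_diff : DifferentiableOn ℝ (iteratedDeriv 1 F) (interior (Set.Ioi 0)) := by
    rw [interior_Ioi]
    exact fun x hx => (hDF 1 x hx).differentiableAt.differentiableWithinAt
  have hw_dzero : ∀ x ∈ interior (Set.Ioi (0:ℝ)), deriv (iteratedDeriv 1 F) x = 0 := by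
    intro x hx
    rw [interior_Ioi] at hx
    rw [(hDF 1 x hx).deriv]
    exact hu_zero x hx
  have hw_mono : MonotoneOn (iteratedDeriv 1 F) (Set.Ioi 0) :=
    monotoneOn_of_deriv_nonneg (convex_Ioi 0) hw_cont hw_diff
      (fun x hx => le_of_eq (hw_dzero x hx).symm)
  have hw_anti : AntitoneOn (iteratedDeriv 1 F) (Set.Ioi 0) :=
    antitoneOn_of_deriv_nonpos (convex_Ioi 0) hw_cont hw_diff
      (fun x hx => le_of_eq (hw_dzero x hx))
  have hw_eq : ∀ y ∈ Set.Ioi (0:ℝ), iteratedDeriv 1 F y = -(Nat.factorial (n+1) : ℝ) := by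
    intro y hy
    have hev : ∀ᶠ x in nhdsWithin 0 (Set.Ioi 0),
        iteratedDeriv 1 F x = iteratedDeriv 1 F y := by
      filter_upwards [Ioo_mem_nhdsGT_of_mem (Set.left_mem_Ico.mpr hy)] with x hx
      exact le_antisymm (hw_mono hx.1 hy hx.2.le) (hw_anti hx.1 hy hx.2.le)
    have h2 : Filter.Tendsto (iteratedDeriv 1 F) (nhdsWithin 0 (Set.Ioi 0))
        (nhds (iteratedDeriv 1 F y)) := by
      refine Filter.Tendsto.congr' ?_ tendsto_const_nhds
      filter_upwards [hev] with x hx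
      exact hx.symm
    exact tendsto_nhds_unique h2 (lim_w n)
  -- hence F is affine with negative slope; contradiction with nonnegativity
  set c : ℝ := (Nat.factorial (n+1) : ℝ) with hc
  have hcpos : 0 < c := by
    rw [hc]; exact_mod_cast Nat.factorial_pos (n+1)
  set G : ℝ → ℝ := fun x => F x + c * x with hG
  have hG_cont : ContinuousOn G (Set.Ioi 0) := by
    intro x hx
    have h0 : HasDerivAt F (iteratedDeriv 1 F x) x := by
      have := hDF 0 x hx
      rwa [iteratedDeriv_zero] at this
    exact (h0.continuousAt.add (continuous_const.mul continuous_id).continuousAt).continuousWithinAt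
  have hG_deriv : ∀ x ∈ interior (Set.Ioi (0:ℝ)), deriv G x = 0 := by
    intro x hx
    rw [interior_Ioi] at hx
    have h0 : HasDerivAt F (iteratedDeriv 1 F x) x := by
      have := hDF 0 x hx
      rwa [iteratedDeriv_zero] at this
    have hd : HasDerivAt G (iteratedDeriv 1 F x + c * 1) x :=
      h0.add ((hasDerivAt_id x).const_mul c)
    rw [hd.deriv, hw_eq x hx]
    ring
  have hG_diff : DifferentiableOn ℝ G (interior (Set.Ioi 0)) := by
    rw [interior_Ioi]
    intro x hx
    have h0 : HasDerivAt F (iteratedDeriv 1 F x) x := by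
      have := hDF 0 x hx
      rwa [iteratedDeriv_zero] at this
    exact (h0.add ((hasDerivAt_id x).const_mul c)).differentiableAt.differentiableWithinAt
  have hG_mono : MonotoneOn G (Set.Ioi 0) :=
    monotoneOn_of_deriv_nonneg (convex_Ioi 0) hG_cont hG_diff
      (fun x hx => le_of_eq (hG_deriv x hx).symm)
  have hG_anti : AntitoneOn G (Set.Ioi 0) :=
    antitoneOn_of_deriv_nonpos (convex_Ioi 0) hG_cont hG_diff
      (fun x hx => le_of_eq (hG_deriv x hx))
  -- F 1 ≥ 0 and F y ≥ 0
  have hF1 : 0 ≤ F 1 := by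
    have := hsign 0 1 one_pos
    simpa using this
  set y : ℝ := 1 + (F 1 + 1)/c with hy
  have hy1 : 1 < y := by
    rw [hy]
    have : 0 < (F 1 + 1)/c := div_pos (by linarith) hcpos
    linarith
  have hy0 : y ∈ Set.Ioi (0:ℝ) := by
    simp only [Set.mem_Ioi]; linarith
  have h1mem : (1:ℝ) ∈ Set.Ioi (0:ℝ) := by norm_num
  have hGeq : G y = G 1 :=
    le_antisymm (hG_anti h1mem hy0 hy1.le) (hG_mono h1mem hy0 hy1.le)
  have hFy : F y = -1 := by
    have : F y + c * y = F 1 + c * 1 := hGeq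
    have hcy : c * y = c + (F 1 + 1) := by
      rw [hy]
      field_simp
    rw [hcy] at this
    linarith
  have hFy' : 0 ≤ F y := by
    have := hsign 0 y hy0
    simpa using this
  rw [hFy] at hFy'
  linarith
end

section
/- For every integer m ≥ 2 and every t > 0, the (m−2)-nd derivative of the function t ↦ t^{m−1}/(1 − e^{−t}) satisfies (d/dt)^{m−2} [ t^{m−1}/(1 − e^{−t}) ] ≥ ((m−1)!/2) · t + (m−2)!. -/
open MeasureTheory Real Finset
open scoped Nat

noncomputable section

namespace Stmt12Aux

open Complex Filter Set

lemma ne_c (a : ℝ) (ha : a ≠ 0) (t : ℝ) : (t : ℂ) - a * I ≠ 0 := by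
  intro h
  have h2 : ((t : ℂ) - a * I).im = 0 := by rw [h]; simp
  simp at h2
  exact ha h2

def Fc (a : ℝ) : ℝ → ℂ := fun s => ((s : ℂ) - a * I)⁻¹

lemma contDiff_Fc (a : ℝ) (ha : a ≠ 0) : ContDiff ℝ (⊤ : ℕ∞) (Fc a) := by
  apply ContDiff.inv
  · exact Complex.ofRealCLM.contDiff.sub contDiff_const
  · exact fun t => ne_c a ha t

lemma hasDerivAt_invPow (a : ℝ) (ha : a ≠ 0) (p : ℕ) (t : ℝ) :
    HasDerivAt (fun s : ℝ => (((s : ℂ) - a * I)⁻¹) ^ p)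
      (-(p : ℂ) * (((t : ℂ) - a * I)⁻¹) ^ (p + 1)) t := by
  have hz : (t : ℂ) - a * I ≠ 0 := ne_c a ha t
  have h1 : HasDerivAt (fun w : ℂ => (w - a * I) ^ (-(p : ℤ)))
      ((-(p : ℤ)) * ((t : ℂ) - a * I) ^ (-(p : ℤ) - 1)) (t : ℂ) := by
    have hg := hasDerivAt_zpow (-(p : ℤ)) ((t : ℂ) - a * I) (Or.inl hz)
    have hi : HasDerivAt (fun w : ℂ => w - a * I) 1 (t : ℂ) := (hasDerivAt_id _).sub_const _
    simpa [Function.comp_def] using hg.comp (t : ℂ) hi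
  have h2 := h1.comp_ofReal
  have e1 : (fun s : ℝ => (((s : ℂ) - a * I) ^ (-(p : ℤ)))) =
      fun s : ℝ => (((s : ℂ) - a * I)⁻¹) ^ p := by
    funext s
    rw [zpow_neg, zpow_natCast, inv_pow]
  have e2 : ((-(p : ℤ)) : ℂ) * ((t : ℂ) - a * I) ^ (-(p : ℤ) - 1) =
      -(p : ℂ) * (((t : ℂ) - a * I)⁻¹) ^ (p + 1) := by
    have : (-(p : ℤ) - 1) = -((p + 1 : ℕ) : ℤ) := by push_cast; ring
    rw [this, zpow_neg, zpow_natCast, inv_pow]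
    push_cast
    ring
  rw [e1] at h2
  rw [← e2]
  exact h2

lemma iteratedDeriv_Fc (a : ℝ) (ha : a ≠ 0) (n : ℕ) :
    iteratedDeriv n (Fc a) = fun t : ℝ => (-1 : ℂ) ^ n * (n ! : ℂ) * (((t : ℂ) - a * I)⁻¹) ^ (n + 1) := by
  induction n with
  | zero => funext t; simp [Fc]
  | succ n ih =>
    funext t
    rw [iteratedDeriv_succ, ih]
    have h := ((hasDerivAt_invPow a ha (n + 1) t).const_mul ((-1 : ℂ) ^ n * (n ! : ℂ))).deriv
    rw [h]
    rw [Nat.factorial_succ]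
    push_cast
    ring

lemma abs_c (a t : ℝ) : ‖((t : ℂ) - a * I)‖ = Real.sqrt (t ^ 2 + a ^ 2) := by
  rw [Complex.norm_def, Complex.normSq_apply]
  congr 1
  simp
  ring

lemma norm_iteratedDeriv_Fc (a : ℝ) (ha : a ≠ 0) (n : ℕ) (t : ℝ) :
    ‖iteratedDeriv n (Fc a) t‖ = (n ! : ℝ) * ((Real.sqrt (t ^ 2 + a ^ 2))⁻¹) ^ (n + 1) := by
  rw [iteratedDeriv_Fc a ha n]
  rw [norm_mul, norm_mul, norm_pow, norm_pow, norm_inv, norm_neg, norm_one, one_pow, one_mul,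
    Complex.norm_natCast, abs_c]

lemma iteratedDeriv_comp_clm (σ : ℂ →L[ℝ] ℝ) {F : ℝ → ℂ} (hF : ContDiff ℝ (⊤ : ℕ∞) F) (n : ℕ) (t : ℝ) :
    iteratedDeriv n (fun s => σ (F s)) t = σ (iteratedDeriv n F t) := by
  rw [iteratedDeriv_eq_iteratedFDeriv, iteratedDeriv_eq_iteratedFDeriv]
  have h := σ.iteratedFDeriv_comp_left ((hF.of_le (mod_cast le_top)).contDiffAt (x := t)) (i := n) le_rfl
  rw [show (fun s => σ (F s)) = σ ∘ F from rfl, h]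
  simp

end Stmt12Aux
section Part2
namespace Stmt12Aux
open Complex Filter Set

lemma sq_add_sq_pos (a : ℝ) (ha : a ≠ 0) (s : ℝ) : 0 < s ^ 2 + a ^ 2 := by positivity

lemma contDiff_K0 (a : ℝ) (ha : a ≠ 0) : ContDiff ℝ (⊤ : ℕ∞) (fun s : ℝ => (s ^ 2 + a ^ 2)⁻¹) := by
  apply ContDiff.inv
  · exact (contDiff_id.pow 2).add contDiff_const
  · exact fun s => (sq_add_sq_pos a ha s).ne'

lemma iteratedDeriv_const_mul_fun (c : ℝ) {f : ℝ → ℝ} (hf : ContDiff ℝ (⊤ : ℕ∞) f) (n : ℕ) (t : ℝ) :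
    iteratedDeriv n (fun x => c * f x) t = c * iteratedDeriv n f t := by
  have h := iteratedDerivWithin_const_mul (𝕜 := ℝ) (Set.mem_univ t) uniqueDiffOn_univ c
    (((hf.of_le (mod_cast le_top)).contDiffOn (n := n)).contDiffWithinAt (Set.mem_univ t))
  simpa [iteratedDerivWithin_univ] using h

lemma iteratedDeriv_add_fun {f g : ℝ → ℝ} (hf : ContDiff ℝ (⊤ : ℕ∞) f) (hg : ContDiff ℝ (⊤ : ℕ∞) g)
    (n : ℕ) (t : ℝ) :
    iteratedDeriv n (fun x => f x + g x) t = iteratedDeriv n f t + iteratedDeriv n g t := by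
  have h := iteratedDerivWithin_add (𝕜 := ℝ) (Set.mem_univ t) uniqueDiffOn_univ
    (((hf.of_le (mod_cast le_top)).contDiffOn (n := n)).contDiffWithinAt (Set.mem_univ t)) (((hg.of_le (mod_cast le_top)).contDiffOn (n := n)).contDiffWithinAt (Set.mem_univ t))
  have e : (fun x => f x + g x) = f + g := rfl
  rw [e]
  simpa [iteratedDerivWithin_univ] using h

lemma K1_eq (a : ℝ) (ha : a ≠ 0) :
    (fun s : ℝ => s * (s ^ 2 + a ^ 2)⁻¹) = fun s : ℝ => Complex.reCLM (Fc a s) := by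
  funext s
  have h : ((s : ℂ) - a * I).re = s := by simp
  have h2 : Complex.normSq ((s : ℂ) - a * I) = s ^ 2 + a ^ 2 := by
    rw [Complex.normSq_apply]; simp; ring
  simp only [Complex.reCLM_apply, Fc, Complex.inv_re, h, h2]
  rw [div_eq_mul_inv]

lemma K0_eq (a : ℝ) (ha : a ≠ 0) :
    (fun s : ℝ => (s ^ 2 + a ^ 2)⁻¹) = fun s : ℝ => a⁻¹ * Complex.imCLM (Fc a s) := by
  funext s
  have h : ((s : ℂ) - a * I).im = -a := by simp
  have h2 : Complex.normSq ((s : ℂ) - a * I) = s ^ 2 + a ^ 2 := by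
    rw [Complex.normSq_apply]; simp; ring
  simp only [Complex.imCLM_apply, Fc, Complex.inv_im, h, h2]
  rw [neg_neg, div_eq_mul_inv, ← mul_assoc, inv_mul_cancel₀ ha, one_mul]

lemma a_le_sqrt (a t : ℝ) (ha : 0 ≤ a) : a ≤ Real.sqrt (t ^ 2 + a ^ 2) := by
  have h : a = Real.sqrt (a ^ 2) := (Real.sqrt_sq ha).symm
  rw [h]
  apply Real.sqrt_le_sqrt
  nlinarith [sq_nonneg t, sq_nonneg a]

lemma bound_K1 (a : ℝ) (ha : a ≠ 0) (n : ℕ) (t : ℝ) :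
    |iteratedDeriv n (fun s : ℝ => s * (s ^ 2 + a ^ 2)⁻¹) t| ≤
      (n ! : ℝ) * ((Real.sqrt (t ^ 2 + a ^ 2))⁻¹) ^ (n + 1) := by
  rw [K1_eq a ha, iteratedDeriv_comp_clm _ (contDiff_Fc a ha)]
  have h1 : |(iteratedDeriv n (Fc a) t).re| ≤ ‖iteratedDeriv n (Fc a) t‖ :=
    Complex.abs_re_le_norm _
  calc |Complex.reCLM (iteratedDeriv n (Fc a) t)| ≤ ‖iteratedDeriv n (Fc a) t‖ := h1
    _ = (n ! : ℝ) * ((Real.sqrt (t ^ 2 + a ^ 2))⁻¹) ^ (n + 1) := norm_iteratedDeriv_Fc a ha n t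

lemma bound_K0 (a : ℝ) (ha : 0 < a) (n : ℕ) (t : ℝ) :
    |iteratedDeriv n (fun s : ℝ => (s ^ 2 + a ^ 2)⁻¹) t| ≤
      a⁻¹ * ((n ! : ℝ) * ((Real.sqrt (t ^ 2 + a ^ 2))⁻¹) ^ (n + 1)) := by
  rw [K0_eq a ha.ne']
  have hsm : ContDiff ℝ (⊤ : ℕ∞) (fun s : ℝ => Complex.imCLM (Fc a s)) :=
    Complex.imCLM.contDiff.comp (contDiff_Fc a ha.ne')
  rw [iteratedDeriv_const_mul_fun a⁻¹ hsm n t]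
  rw [abs_mul, abs_inv, abs_of_pos ha]
  apply mul_le_mul_of_nonneg_left _ (by positivity)
  rw [iteratedDeriv_comp_clm _ (contDiff_Fc a ha.ne')]
  calc |Complex.imCLM (iteratedDeriv n (Fc a) t)| ≤ ‖iteratedDeriv n (Fc a) t‖ :=
        Complex.abs_im_le_norm _
    _ = _ := norm_iteratedDeriv_Fc a ha.ne' n t

lemma iteratedDeriv_monomial (c : ℝ) (d : ℕ) (n : ℕ) :
    iteratedDeriv n (fun x : ℝ => c * x ^ d) =
      fun x : ℝ => (c * (d.descFactorial n : ℝ)) * x ^ (d - n) := by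
  induction n with
  | zero => funext x; simp
  | succ n ih =>
    funext x
    rw [iteratedDeriv_succ, ih]
    have h := ((hasDerivAt_pow (d - n) x).const_mul (c * (d.descFactorial n : ℝ))).deriv
    rw [h, Nat.descFactorial_succ, Nat.sub_sub]
    push_cast
    ring

lemma contDiff_polysum (cfun : ℕ → ℝ) (dfun : ℕ → ℕ) (K : ℕ) :
    ContDiff ℝ (⊤ : ℕ∞) (fun x : ℝ => ∑ i ∈ Finset.range K, cfun i * x ^ (dfun i)) := by
  induction K with
  | zero => simp only [Finset.range_zero, Finset.sum_empty]; exact contDiff_const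
  | succ K ih =>
    have e : (fun x : ℝ => ∑ i ∈ Finset.range (K + 1), cfun i * x ^ (dfun i)) =
        fun x : ℝ => (∑ i ∈ Finset.range K, cfun i * x ^ (dfun i)) + cfun K * x ^ (dfun K) := by
      funext x; rw [Finset.sum_range_succ]
    rw [e]
    exact ih.add (contDiff_const.mul (contDiff_id.pow _))

lemma iteratedDeriv_polysum (cfun : ℕ → ℝ) (dfun : ℕ → ℕ) (K : ℕ) (n : ℕ) (t : ℝ) :
    iteratedDeriv n (fun x : ℝ => ∑ i ∈ Finset.range K, cfun i * x ^ (dfun i)) t =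
      ∑ i ∈ Finset.range K, (cfun i * ((dfun i).descFactorial n : ℝ)) * t ^ (dfun i - n) := by
  induction K with
  | zero =>
    simp only [Finset.range_zero, Finset.sum_empty]
    have e : (fun _ : ℝ => (0 : ℝ)) = fun x : ℝ => (0 : ℝ) * x ^ 0 := by funext x; simp
    rw [e, iteratedDeriv_monomial]
    simp
  | succ K ih =>
    have e : (fun x : ℝ => ∑ i ∈ Finset.range (K + 1), cfun i * x ^ (dfun i)) =
        fun x : ℝ => (∑ i ∈ Finset.range K, cfun i * x ^ (dfun i)) + cfun K * x ^ (dfun K) := by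
      funext x; rw [Finset.sum_range_succ]
    have hg : ContDiff ℝ (⊤ : ℕ∞) (fun x : ℝ => cfun K * x ^ dfun K) :=
      contDiff_const.mul (contDiff_id.pow _)
    rw [e, iteratedDeriv_add_fun (contDiff_polysum cfun dfun K) hg, ih, Finset.sum_range_succ]
    congr 1
    rw [iteratedDeriv_monomial]

end Stmt12Aux
end Part2
section Part3
namespace Stmt12Aux
open Filter Set

lemma descFactorial_le_factorial (n k : ℕ) : n.descFactorial k ≤ n ! := by
  rcases le_or_gt k n with h | h
  · have hid := Nat.factorial_mul_descFactorial h
    calc n.descFactorial k ≤ (n - k)! * n.descFactorial k :=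
          Nat.le_mul_of_pos_left _ (Nat.factorial_pos _)
      _ = n ! := hid
  · rw [Nat.descFactorial_eq_zero_iff_lt.mpr h]
    exact Nat.zero_le _

def G (m : ℕ) (a : ℝ) : ℝ → ℝ := fun s => 2 * s ^ m * (s ^ 2 + a ^ 2)⁻¹

lemma contDiff_G (m : ℕ) (a : ℝ) (ha : a ≠ 0) : ContDiff ℝ (⊤ : ℕ∞) (G m a) :=
  (contDiff_const.mul (contDiff_id.pow m)).mul (contDiff_K0 a ha)

lemma poly_id (ε k : ℕ) (a s : ℝ) :
    s ^ (2 * k + ε) =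
      (∑ i ∈ Finset.range k, (-1 : ℝ) ^ i * a ^ (2 * i) * s ^ (2 * k + ε - 2 - 2 * i)) *
        (s ^ 2 + a ^ 2) + (-1) ^ k * a ^ (2 * k) * s ^ ε := by
  induction k with
  | zero => simp
  | succ k ih =>
    have hs : ∑ i ∈ Finset.range (k + 1), (-1 : ℝ) ^ i * a ^ (2 * i) *
          s ^ (2 * (k + 1) + ε - 2 - 2 * i) =
        (-(a ^ 2)) * (∑ i ∈ Finset.range k, (-1 : ℝ) ^ i * a ^ (2 * i) *
          s ^ (2 * k + ε - 2 - 2 * i)) + s ^ (2 * k + ε) := by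
      rw [Finset.sum_range_succ', Finset.mul_sum]
      congr 1
      · apply Finset.sum_congr rfl
        intro i _
        have hexp : 2 * (k + 1) + ε - 2 - 2 * (i + 1) = 2 * k + ε - 2 - 2 * i := by omega
        rw [hexp, show 2 * (i + 1) = 2 * i + 2 by ring, pow_add]
        ring
      · have hexp : 2 * (k + 1) + ε - 2 - 2 * 0 = 2 * k + ε := by omega
        rw [hexp]
        simp
    rw [hs, show 2 * (k + 1) + ε = (2 * k + ε) + 2 by ring,
      show 2 * (k + 1) = 2 * k + 2 by ring, pow_add, pow_add, pow_succ]
    linear_combination (-(a ^ 2)) * ih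

lemma G_eq (m k ε : ℕ) (hmk : m = 2 * k + ε) (a : ℝ) (ha : a ≠ 0) (s : ℝ) :
    G m a s = (∑ i ∈ Finset.range k, (2 * (-1 : ℝ) ^ i * a ^ (2 * i)) * s ^ (m - 2 - 2 * i)) +
      ((-1 : ℝ) ^ k * (2 * a ^ (2 * k))) * (s ^ ε * (s ^ 2 + a ^ 2)⁻¹) := by
  subst hmk
  have hpos : s ^ 2 + a ^ 2 ≠ 0 := (sq_add_sq_pos a ha s).ne'
  have hid := poly_id ε k a s
  have hsum : (∑ i ∈ Finset.range k, (2 * (-1 : ℝ) ^ i * a ^ (2 * i)) *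
      s ^ (2 * k + ε - 2 - 2 * i)) = 2 * ∑ i ∈ Finset.range k, (-1 : ℝ) ^ i * a ^ (2 * i) *
      s ^ (2 * k + ε - 2 - 2 * i) := by
    rw [Finset.mul_sum]
    apply Finset.sum_congr rfl
    intro i _
    ring
  rw [hsum]
  show 2 * s ^ (2 * k + ε) * (s ^ 2 + a ^ 2)⁻¹ = _
  field_simp
  linear_combination hid

lemma G_nonneg (m : ℕ) (hm : 2 ≤ m) (a : ℝ) (ha : 1 ≤ a) (t : ℝ) :
    0 ≤ iteratedDeriv (m - 2) (G m a) t := by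
  have ha0 : (0 : ℝ) < a := lt_of_lt_of_le one_pos ha
  obtain ⟨k, ε, hk1, hε, hmk⟩ : ∃ k ε, 1 ≤ k ∧ ε ≤ 1 ∧ m = 2 * k + ε :=
    ⟨m / 2, m % 2, by omega, by omega, by omega⟩
  have hinner : ContDiff ℝ (⊤ : ℕ∞) (fun s : ℝ => s ^ ε * (s ^ 2 + a ^ 2)⁻¹) :=
    (contDiff_id.pow ε).mul (contDiff_K0 a ha0.ne')
  have hfun : G m a = fun s =>
      (fun s : ℝ => ∑ i ∈ Finset.range k, (2 * (-1 : ℝ) ^ i * a ^ (2 * i)) * s ^ (m - 2 - 2 * i)) s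
      + (fun s : ℝ => ((-1 : ℝ) ^ k * (2 * a ^ (2 * k))) * (s ^ ε * (s ^ 2 + a ^ 2)⁻¹)) s := by
    funext s
    exact G_eq m k ε hmk a ha0.ne' s
  rw [hfun, iteratedDeriv_add_fun (contDiff_polysum _ _ k)
    (contDiff_const.mul hinner), iteratedDeriv_polysum,
    iteratedDeriv_const_mul_fun _ hinner]
  have hsum : ∑ i ∈ Finset.range k, (2 * (-1 : ℝ) ^ i * a ^ (2 * i) *
      ((m - 2 - 2 * i).descFactorial (m - 2) : ℝ)) * t ^ (m - 2 - 2 * i - (m - 2)) =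
      2 * ((m - 2)! : ℝ) := by
    rw [Finset.sum_eq_single 0]
    · simp [Nat.descFactorial_self, Nat.sub_self]
    · intro i hi hi0
      have hik : i < k := Finset.mem_range.mp hi
      have hz : (m - 2 - 2 * i).descFactorial (m - 2) = 0 :=
        Nat.descFactorial_eq_zero_iff_lt.mpr (by omega)
      rw [hz]
      simp
    · intro h0
      exact absurd (Finset.mem_range.mpr (by omega)) h0
  rw [hsum]
  set D := iteratedDeriv (m - 2) (fun s : ℝ => s ^ ε * (s ^ 2 + a ^ 2)⁻¹) t with hD
  set S := Real.sqrt (t ^ 2 + a ^ 2) with hS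
  have haS : a ≤ S := a_le_sqrt a t ha0.le
  have hS0 : 0 < S := lt_of_lt_of_le ha0 haS
  set c := ((m - 2)! : ℝ) with hc
  have hc0 : 0 < c := by positivity
  have hq1 : (a * S⁻¹) ^ (m - 1) ≤ 1 := by
    apply pow_le_one₀ (by positivity)
    rw [← div_eq_mul_inv, div_le_one hS0]
    exact haS
  have hkey : a ^ (2 * k) * |D| ≤ c := by
    interval_cases ε
    · -- ε = 0 : m = 2k
      have h0 : (fun s : ℝ => s ^ 0 * (s ^ 2 + a ^ 2)⁻¹) = fun s : ℝ => (s ^ 2 + a ^ 2)⁻¹ := by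
        funext s; simp
      have hb := bound_K0 a ha0 (m - 2) t
      rw [show m - 2 + 1 = m - 1 from by omega] at hb
      rw [hD, h0]
      calc a ^ (2 * k) * |iteratedDeriv (m - 2) (fun s : ℝ => (s ^ 2 + a ^ 2)⁻¹) t|
          ≤ a ^ (2 * k) * (a⁻¹ * (c * (S⁻¹) ^ (m - 1))) :=
            mul_le_mul_of_nonneg_left hb (by positivity)
        _ = c * (a * S⁻¹) ^ (m - 1) := by
            rw [show a ^ (2 * k) = a ^ (m - 1) * a from by rw [← pow_succ]; congr 1; omega,
              mul_pow]
            field_simp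
        _ ≤ c * 1 := mul_le_mul_of_nonneg_left hq1 hc0.le
        _ = c := mul_one c
    · -- ε = 1 : m = 2k + 1
      have h1 : (fun s : ℝ => s ^ 1 * (s ^ 2 + a ^ 2)⁻¹) = fun s : ℝ => s * (s ^ 2 + a ^ 2)⁻¹ := by
        funext s; simp
      have hb := bound_K1 a ha0.ne' (m - 2) t
      rw [show m - 2 + 1 = m - 1 from by omega] at hb
      rw [hD, h1]
      calc a ^ (2 * k) * |iteratedDeriv (m - 2) (fun s : ℝ => s * (s ^ 2 + a ^ 2)⁻¹) t|
          ≤ a ^ (2 * k) * (c * (S⁻¹) ^ (m - 1)) :=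
            mul_le_mul_of_nonneg_left hb (by positivity)
        _ = c * (a * S⁻¹) ^ (m - 1) := by
            rw [show 2 * k = m - 1 from by omega, mul_pow]
            ring
        _ ≤ c * 1 := mul_le_mul_of_nonneg_left hq1 hc0.le
        _ = c := mul_one c
  have habs : |((-1 : ℝ)) ^ k * (2 * a ^ (2 * k)) * D| ≤ 2 * c := by
    rw [abs_mul, abs_mul, show |(-1 : ℝ) ^ k| = 1 from by
      rw [_root_.abs_pow, _root_.abs_neg, _root_.abs_one, one_pow], one_mul,
      _root_.abs_of_pos (by positivity : (0 : ℝ) < 2 * a ^ (2 * k))]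
    calc 2 * a ^ (2 * k) * |D| = 2 * (a ^ (2 * k) * |D|) := by ring
      _ ≤ 2 * c := by linarith
  have := abs_le.mp habs
  linarith [this.1]

lemma G_bound (m : ℕ) (a R : ℝ) (ha : 1 ≤ a) (hR : 1 ≤ R) (n : ℕ) (t : ℝ) (htR : |t| ≤ R) :
    |iteratedDeriv n (G m a) t| ≤ (2 ^ n * (2 * (m ! : ℝ) * R ^ m) * (n ! : ℝ)) / a ^ 2 := by
  have ha0 : (0 : ℝ) < a := lt_of_lt_of_le one_pos ha
  have hf : ContDiff ℝ (⊤ : ℕ∞) (fun s : ℝ => 2 * s ^ m) := contDiff_const.mul (contDiff_id.pow m)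
  have hg : ContDiff ℝ (⊤ : ℕ∞) (fun s : ℝ => (s ^ 2 + a ^ 2)⁻¹) := contDiff_K0 a ha0.ne'
  have key := norm_iteratedFDeriv_mul_le hf hg t (n := n) (mod_cast le_top)
  have hGf : G m a = fun y => (fun s : ℝ => 2 * s ^ m) y * (fun s : ℝ => (s ^ 2 + a ^ 2)⁻¹) y :=
    rfl
  have hstep : ∀ i ∈ Finset.range (n + 1),
      (n.choose i : ℝ) * ‖iteratedFDeriv ℝ i (fun s : ℝ => 2 * s ^ m) t‖ *
        ‖iteratedFDeriv ℝ (n - i) (fun s : ℝ => (s ^ 2 + a ^ 2)⁻¹) t‖ ≤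
      (n.choose i : ℝ) * ((2 * (m ! : ℝ) * R ^ m) * ((n ! : ℝ) / a ^ 2)) := by
    intro i _
    have h1 : ‖iteratedFDeriv ℝ i (fun s : ℝ => 2 * s ^ m) t‖ ≤ 2 * (m ! : ℝ) * R ^ m := by
      rw [norm_iteratedFDeriv_eq_norm_iteratedDeriv, iteratedDeriv_monomial 2 m i,
        Real.norm_eq_abs, _root_.abs_mul]
      have e1 : |(2 : ℝ) * ((m.descFactorial i : ℝ))| ≤ 2 * (m ! : ℝ) := by
        rw [_root_.abs_of_nonneg (by positivity)]
        have hd : (m.descFactorial i : ℝ) ≤ (m ! : ℝ) := by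
          exact_mod_cast descFactorial_le_factorial m i
        linarith
      have e2 : |t ^ (m - i)| ≤ R ^ m := by
        rw [_root_.abs_pow]
        calc |t| ^ (m - i) ≤ R ^ (m - i) := pow_le_pow_left₀ (abs_nonneg t) htR _
          _ ≤ R ^ m := pow_le_pow_right₀ hR (Nat.sub_le m i)
      calc |(2 : ℝ) * (m.descFactorial i : ℝ)| * |t ^ (m - i)|
          ≤ (2 * (m ! : ℝ)) * R ^ m :=
            mul_le_mul e1 e2 (abs_nonneg _) (by positivity)
        _ = 2 * (m ! : ℝ) * R ^ m := by ring
    have h2 : ‖iteratedFDeriv ℝ (n - i) (fun s : ℝ => (s ^ 2 + a ^ 2)⁻¹) t‖ ≤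
        (n ! : ℝ) / a ^ 2 := by
      rw [norm_iteratedFDeriv_eq_norm_iteratedDeriv, Real.norm_eq_abs]
      have hb := bound_K0 a ha0 (n - i) t
      have hSa : (Real.sqrt (t ^ 2 + a ^ 2))⁻¹ ≤ a⁻¹ := by
        rw [inv_le_inv₀ (by positivity) ha0]
        exact a_le_sqrt a t ha0.le
      have hinva : a⁻¹ ≤ 1 := by
        rw [inv_le_one_iff₀]
        right; exact ha
      have hstep2 : ((Real.sqrt (t ^ 2 + a ^ 2))⁻¹) ^ (n - i + 1) ≤ a⁻¹ := by
        calc ((Real.sqrt (t ^ 2 + a ^ 2))⁻¹) ^ (n - i + 1) ≤ (a⁻¹) ^ (n - i + 1) :=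
              pow_le_pow_left₀ (by positivity) hSa _
          _ ≤ (a⁻¹) ^ 1 := pow_le_pow_of_le_one (by positivity) hinva (by omega)
          _ = a⁻¹ := pow_one _
      have hfac : (((n - i)!) : ℝ) ≤ (n ! : ℝ) := by
        exact_mod_cast Nat.factorial_le (Nat.sub_le n i)
      calc |iteratedDeriv (n - i) (fun s : ℝ => (s ^ 2 + a ^ 2)⁻¹) t|
          ≤ a⁻¹ * (((n - i)! : ℝ) * ((Real.sqrt (t ^ 2 + a ^ 2))⁻¹) ^ (n - i + 1)) := hb
        _ ≤ a⁻¹ * ((n ! : ℝ) * a⁻¹) := by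
            apply mul_le_mul_of_nonneg_left _ (by positivity)
            exact mul_le_mul hfac hstep2 (by positivity) (by positivity)
        _ = (n ! : ℝ) / a ^ 2 := by
            rw [div_eq_mul_inv, sq, mul_inv]
            ring
    have hchoose : (0 : ℝ) ≤ (n.choose i : ℝ) := by positivity
    calc (n.choose i : ℝ) * ‖iteratedFDeriv ℝ i (fun s : ℝ => 2 * s ^ m) t‖ *
          ‖iteratedFDeriv ℝ (n - i) (fun s : ℝ => (s ^ 2 + a ^ 2)⁻¹) t‖
        ≤ (n.choose i : ℝ) * (2 * (m ! : ℝ) * R ^ m) * ((n ! : ℝ) / a ^ 2) :=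
          mul_le_mul (mul_le_mul_of_nonneg_left h1 hchoose) h2 (norm_nonneg _) (by positivity)
      _ = (n.choose i : ℝ) * ((2 * (m ! : ℝ) * R ^ m) * ((n ! : ℝ) / a ^ 2)) := by ring
  have hnorm : |iteratedDeriv n (G m a) t| = ‖iteratedFDeriv ℝ n (G m a) t‖ := by
    rw [norm_iteratedFDeriv_eq_norm_iteratedDeriv, Real.norm_eq_abs]
  rw [hnorm, hGf]
  calc ‖iteratedFDeriv ℝ n (fun y => (fun s : ℝ => 2 * s ^ m) y *
        (fun s : ℝ => (s ^ 2 + a ^ 2)⁻¹) y) t‖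
      ≤ ∑ i ∈ Finset.range (n + 1), (n.choose i : ℝ) *
          ‖iteratedFDeriv ℝ i (fun s : ℝ => 2 * s ^ m) t‖ *
          ‖iteratedFDeriv ℝ (n - i) (fun s : ℝ => (s ^ 2 + a ^ 2)⁻¹) t‖ := key
    _ ≤ ∑ i ∈ Finset.range (n + 1), (n.choose i : ℝ) *
          ((2 * (m ! : ℝ) * R ^ m) * ((n ! : ℝ) / a ^ 2)) := Finset.sum_le_sum hstep
    _ = (2 ^ n * (2 * (m ! : ℝ) * R ^ m) * (n ! : ℝ)) / a ^ 2 := by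
        rw [← Finset.sum_mul,
          show (∑ i ∈ Finset.range (n + 1), (n.choose i : ℝ)) = (2 : ℝ) ^ n from by
            rw [← Nat.cast_sum, Nat.sum_range_choose]; push_cast; ring]
        ring

end Stmt12Aux
end Part3
section Part4
namespace Stmt12Aux
open Complex Filter Set

def w (n : ℤ) : ℂ := ((2 * π * (n : ℝ) : ℝ) : ℂ) * I

lemma w_re (n : ℤ) : (w n).re = 0 := by simp [w]

lemma tw_ne (t : ℝ) (ht : 0 < t) (n : ℤ) : ((t : ℂ) - w n) ≠ 0 := by
  intro hc
  have h2 : ((t : ℂ) - w n).re = 0 := by rw [hc]; simp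
  rw [Complex.sub_re, w_re, Complex.ofReal_re, sub_zero] at h2
  exact ht.ne' h2

lemma tw_ne' (t : ℝ) (ht : 0 < t) (n : ℤ) : (-(t : ℂ) - w n) ≠ 0 := by
  intro hc
  have h2 : (-(t : ℂ) - w n).re = 0 := by rw [hc]; simp
  rw [Complex.sub_re, w_re, Complex.neg_re, Complex.ofReal_re, sub_zero] at h2
  have : t = 0 := by linarith [h2]
  exact ht.ne' this

lemma exp_neg_w (n : ℤ) : Complex.exp (-(w n)) = 1 := by
  rw [show -(w n) = ((-n : ℤ) : ℂ) * (2 * (π : ℂ) * I) from by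
    simp only [w]; push_cast; ring]
  exact Complex.exp_int_mul_two_pi_mul_I _

lemma sq_den_factor (t : ℝ) (n : ℤ) :
    ((t : ℂ) ^ 2 + ((2 * π * (n : ℝ) : ℝ) : ℂ) ^ 2) = ((t : ℂ) - w n) * ((t : ℂ) + w n) := by
  simp only [w]
  linear_combination (((2 * π * (n : ℝ) : ℝ) : ℂ) ^ 2) * Complex.I_sq

lemma den_pos (t : ℝ) (ht : 0 < t) (x : ℝ) : (0 : ℝ) < t ^ 2 + x ^ 2 := by positivity

lemma hasSum_kernel (t : ℝ) (ht : 0 < t) :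
    HasSum (fun k : ℕ => 2 * t / (t ^ 2 + (2 * π * ((k : ℝ) + 1)) ^ 2))
      ((1 - Real.exp (-t))⁻¹ - 1 / t - 1 / 2) := by
  haveI : Fact ((0 : ℝ) < 1) := ⟨one_pos⟩
  set Sh : ℝ := Real.exp (t / 2) - Real.exp (-(t / 2)) with hSh
  have hE1 : 1 < Real.exp (t / 2) := by
    rw [show (1 : ℝ) = Real.exp 0 from (Real.exp_zero).symm]
    exact Real.exp_lt_exp.mpr (by linarith)
  have hSh0 : 0 < Sh := by
    rw [hSh]
    have h1 : Real.exp (-(t / 2)) < Real.exp (t / 2) := Real.exp_lt_exp.mpr (by linarith)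
    linarith
  set g : ℝ → ℂ := fun s => Complex.exp ((t : ℂ) * ((s : ℂ) - 1 / 2)) +
      Complex.exp (-(t : ℂ) * ((s : ℂ) - 1 / 2)) with hg
  have hend : g 0 = g 1 := by
    simp only [hg, Complex.ofReal_zero, Complex.ofReal_one]
    rw [add_comm]
    congr 1
    · congr 1; ring
    · congr 1; ring
  have hgcont : Continuous g := by
    apply Continuous.add
    · exact (continuous_const.mul (Complex.continuous_ofReal.sub continuous_const)).cexp
    · exact (continuous_const.mul (Complex.continuous_ofReal.sub continuous_const)).cexp
  set h : C(AddCircle (1 : ℝ), ℂ) :=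
    ⟨AddCircle.liftIco 1 0 g, AddCircle.liftIco_zero_continuous hend hgcont.continuousOn⟩ with hh
  -- coefficient computation
  have hcoeff : ∀ n : ℤ, fourierCoeff (⇑h) n =
      ((Sh * (2 * t) / (t ^ 2 + (2 * π * (n : ℝ)) ^ 2) : ℝ) : ℂ) := by
    intro n
    rw [fourierCoeff_eq_intervalIntegral (⇑h) n 0]
    have hint1 : ∫ x in (0:ℝ)..(0 + 1 : ℝ), @fourier 1 (-n) x • (⇑h) ↑x =
        ∫ x in (0:ℝ)..(1:ℝ), Complex.exp (-(t : ℂ) / 2) * Complex.exp (((t : ℂ) - w n) * x) +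
          Complex.exp ((t : ℂ) / 2) * Complex.exp ((-(t : ℂ) - w n) * x) := by
      rw [zero_add]
      apply intervalIntegral.integral_congr_ae
      filter_upwards [MeasureTheory.compl_mem_ae_iff.mpr Real.volume_singleton] with x hx hmem
      have hx1 : x ≠ 1 := hx
      rw [Set.uIoc_of_le (by norm_num : (0:ℝ) ≤ 1)] at hmem
      have hxI : x ∈ Set.Ico (0 : ℝ) 1 := ⟨hmem.1.le, lt_of_le_of_ne hmem.2 hx1⟩
      have hlift : (⇑h) ↑x = g x := by
        show AddCircle.liftIco 1 0 g ↑x = g x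
        exact AddCircle.liftIco_zero_coe_apply hxI
      rw [hlift, fourier_coe_apply, smul_eq_mul, hg]
      rw [mul_add, ← Complex.exp_add, ← Complex.exp_add, ← Complex.exp_add, ← Complex.exp_add]
      congr 1 <;> (congr 1; simp only [w]; push_cast; ring)
    rw [hint1]
    have hc1 := tw_ne t ht n
    have hc2 := tw_ne' t ht n
    have hi1 : IntervalIntegrable (fun x : ℝ => Complex.exp (-(t : ℂ) / 2) *
        Complex.exp (((t : ℂ) - w n) * x)) MeasureTheory.volume 0 1 := by
      apply Continuous.intervalIntegrable
      exact continuous_const.mul ((continuous_const.mul Complex.continuous_ofReal).cexp)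
    have hi2 : IntervalIntegrable (fun x : ℝ => Complex.exp ((t : ℂ) / 2) *
        Complex.exp ((-(t : ℂ) - w n) * x)) MeasureTheory.volume 0 1 := by
      apply Continuous.intervalIntegrable
      exact continuous_const.mul ((continuous_const.mul Complex.continuous_ofReal).cexp)
    rw [intervalIntegral.integral_add hi1 hi2, intervalIntegral.integral_const_mul,
      intervalIntegral.integral_const_mul, integral_exp_mul_complex hc1,
      integral_exp_mul_complex hc2]
    simp only [Complex.ofReal_zero, Complex.ofReal_one, mul_one, mul_zero, Complex.exp_zero]
    have he1 : Complex.exp ((t : ℂ) - w n) = Complex.exp (t : ℂ) := by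
      rw [sub_eq_add_neg, Complex.exp_add, exp_neg_w, mul_one]
    have he2 : Complex.exp (-(t : ℂ) - w n) = Complex.exp (-(t : ℂ)) := by
      rw [sub_eq_add_neg, Complex.exp_add, exp_neg_w, mul_one]
    rw [he1, he2]
    -- now pure algebra
    set E : ℂ := Complex.exp ((t : ℂ) / 2) with hE
    have hEne : E ≠ 0 := Complex.exp_ne_zero _
    have hEt : Complex.exp (t : ℂ) = E * E := by
      rw [hE, ← Complex.exp_add]; congr 1; ring
    have hEmt : Complex.exp (-(t : ℂ)) = (E * E)⁻¹ := by
      rw [← hEt, ← Complex.exp_neg]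
    have hEm : Complex.exp (-(t : ℂ) / 2) = E⁻¹ := by
      rw [hE, ← Complex.exp_neg]; congr 1; ring
    have hShC : ((Sh : ℝ) : ℂ) = E - E⁻¹ := by
      rw [hSh]
      push_cast
      rw [hE, ← Complex.exp_neg]
    have hden : ((t ^ 2 + (2 * π * (n : ℝ)) ^ 2 : ℝ) : ℂ) = ((t : ℂ) - w n) * ((t : ℂ) + w n) := by
      push_cast
      rw [← sq_den_factor t n]
      push_cast
      ring
    have hc2' : ((t : ℂ) + w n) ≠ 0 := by
      intro hc
      apply hc2
      rw [show -(t : ℂ) - w n = -((t : ℂ) + w n) from by ring, hc, neg_zero]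
    rw [show ((1 : ℝ) / (1 : ℝ)) = (1 : ℝ) from by norm_num, one_smul]
    rw [hEm, hEt, hEmt]
    rw [Complex.ofReal_div, Complex.ofReal_mul, hShC, hden]
    push_cast
    field_simp
    ring
  -- summability of coefficients
  have hsummand : Summable (fun j : ℕ => Sh * (2 * t) / (t ^ 2 + (2 * π * (j : ℝ)) ^ 2)) := by
    rw [← summable_nat_add_iff 1]
    have hbase : Summable (fun n : ℕ => 1 / ((n : ℝ)) ^ 2) :=
      Real.summable_one_div_nat_pow.mpr one_lt_two
    have hmaj : Summable (fun n : ℕ => Sh * (2 * t) * (1 / ((n : ℝ) + 1) ^ 2)) := by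
      apply Summable.mul_left
      have h2 := (summable_nat_add_iff 1).mpr hbase
      exact h2.congr fun n => by push_cast; ring
    apply Summable.of_nonneg_of_le (fun n => by positivity) _ hmaj
    intro n
    have hd : ((n : ℝ) + 1) ^ 2 ≤ t ^ 2 + (2 * π * ((n + 1 : ℕ) : ℝ)) ^ 2 := by
      push_cast
      have hpi : (1 : ℝ) ≤ 2 * π := by nlinarith [Real.pi_gt_three]
      have h2pi : (1 : ℝ) ≤ (2 * π) ^ 2 := by nlinarith [hpi]
      have h1 : ((n : ℝ) + 1) ^ 2 ≤ (2 * π * ((n : ℝ) + 1)) ^ 2 := by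
        rw [mul_pow]
        calc ((n : ℝ) + 1) ^ 2 = 1 * ((n : ℝ) + 1) ^ 2 := (one_mul _).symm
          _ ≤ (2 * π) ^ 2 * ((n : ℝ) + 1) ^ 2 :=
              mul_le_mul_of_nonneg_right h2pi (sq_nonneg _)
      nlinarith [sq_nonneg t]
    calc Sh * (2 * t) / (t ^ 2 + (2 * π * ((n + 1 : ℕ) : ℝ)) ^ 2)
        ≤ Sh * (2 * t) / ((n : ℝ) + 1) ^ 2 :=
          div_le_div_of_nonneg_left (by positivity) (by positivity) hd
      _ = Sh * (2 * t) * (1 / ((n : ℝ) + 1) ^ 2) := by rw [div_eq_mul_one_div]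
  have hsummandZ : Summable (fun n : ℤ => Sh * (2 * t) / (t ^ 2 + (2 * π * (n : ℝ)) ^ 2)) := by
    apply Summable.of_nat_of_neg
    · exact hsummand.congr fun n => by push_cast; ring
    · exact hsummand.congr fun n => by push_cast; ring
  have hsumZ : Summable (fourierCoeff (⇑h)) :=
    (Complex.summable_ofReal.mpr hsummandZ).congr fun n => (hcoeff n).symm
  have hptsum := has_pointwise_sum_fourier_series_of_summable hsumZ (0 : AddCircle (1 : ℝ))
  simp only [fourier_eval_zero, smul_eq_mul, mul_one] at hptsum
  have h0 : h (0 : AddCircle (1 : ℝ)) = ((Real.exp (-(t / 2)) + Real.exp (t / 2) : ℝ) : ℂ) := by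
    have hlift0 : h (((0 : ℝ)) : AddCircle (1 : ℝ)) = g 0 := by
      show AddCircle.liftIco 1 0 g _ = _
      exact AddCircle.liftIco_zero_coe_apply ⟨le_refl 0, one_pos⟩
    rw [show (0 : AddCircle (1 : ℝ)) = (((0 : ℝ)) : AddCircle (1 : ℝ)) from rfl, hlift0]
    simp only [hg]
    push_cast
    congr 1 <;> (congr 1; ring)
  rw [h0] at hptsum
  simp only [hcoeff] at hptsum
  have hR := Complex.hasSum_ofReal.mp hptsum
  have hnat := hR.nat_add_neg
  have efun1 : (fun n : ℕ => Sh * (2 * t) / (t ^ 2 + (2 * π * ((n : ℤ) : ℝ)) ^ 2) +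
      Sh * (2 * t) / (t ^ 2 + (2 * π * (((-(n : ℤ)) : ℤ) : ℝ)) ^ 2)) =
      fun n : ℕ => 2 * (Sh * (2 * t) / (t ^ 2 + (2 * π * (n : ℝ)) ^ 2)) := by
    funext n
    push_cast
    ring
  rw [efun1] at hnat
  have hshift := (hasSum_nat_add_iff' 1).2 hnat
  rw [Finset.sum_range_one] at hshift
  have hdiv := hshift.div_const (2 * Sh)
  convert hdiv using 1
  · rfl
  · funext k
    have hD : (0 : ℝ) < t ^ 2 + (2 * π * ((k : ℝ) + 1)) ^ 2 := by positivity
    push_cast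
    rw [eq_div_iff (by positivity : (2 : ℝ) * Sh ≠ 0)]
    field_simp
  · -- value identity
    set E : ℝ := Real.exp (t / 2) with hE
    have hE0 : 0 < E := Real.exp_pos _
    have hEinv : Real.exp (-(t / 2)) = E⁻¹ := Real.exp_neg _
    have hEt : Real.exp (-t) = (E * E)⁻¹ := by
      rw [show -t = -(t / 2) + -(t / 2) from by ring, Real.exp_add, hEinv, mul_inv]
    have hEE1 : 1 < E * E := by nlinarith
    have hEi1 : E⁻¹ < 1 := by
      rw [inv_lt_one_iff₀]
      right; exact hE1
    have hA : E ^ 2 - 1 ≠ 0 := by nlinarith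
    have hA' : E * E - 1 ≠ 0 := by nlinarith
    have hB : E - E⁻¹ ≠ 0 := by
      have hgt : 0 < E - E⁻¹ := by linarith
      exact hgt.ne'
    rw [hEt, hSh, hEinv]
    norm_num
    field_simp
    ring

end Stmt12Aux
end Part4
section Part5
namespace Stmt12Aux
open Filter Set

def ak (k : ℕ) : ℝ := 2 * π * ((k : ℝ) + 1)

lemma one_le_ak (k : ℕ) : 1 ≤ ak k := by
  have hpi : (3 : ℝ) < π := Real.pi_gt_three
  have hk : (1 : ℝ) ≤ (k : ℝ) + 1 := by
    have := Nat.cast_nonneg (α := ℝ) k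
    linarith
  calc (1 : ℝ) ≤ 2 * π := by nlinarith
    _ = 2 * π * 1 := (mul_one _).symm
    _ ≤ 2 * π * ((k : ℝ) + 1) := by nlinarith

lemma summable_inv_ak_sq : Summable (fun k : ℕ => ((ak k) ^ 2)⁻¹) := by
  have hbase : Summable (fun n : ℕ => 1 / ((n : ℝ)) ^ 2) :=
    Real.summable_one_div_nat_pow.mpr one_lt_two
  have h2 := (summable_nat_add_iff 1).mpr hbase
  have h3 : Summable (fun k : ℕ => ((2 * π) ^ 2)⁻¹ * (1 / ((k : ℝ) + 1) ^ 2)) :=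
    Summable.mul_left _ (h2.congr fun n => by push_cast; ring)
  apply h3.congr
  intro k
  simp only [ak]
  have hpi : (π : ℝ) ≠ 0 := Real.pi_ne_zero
  have hk : ((k : ℝ) + 1) ≠ 0 := by positivity
  field_simp

lemma summable_D (m : ℕ) (n : ℕ) (x : ℝ) :
    Summable (fun k : ℕ => iteratedDeriv n (G m (ak k)) x) := by
  set R : ℝ := |x| + 1 with hR
  have hR1 : 1 ≤ R := by have := abs_nonneg x; rw [hR]; linarith
  apply Summable.of_norm_bounded
    (g := fun k : ℕ => (2 ^ n * (2 * (m ! : ℝ) * R ^ m) * (n ! : ℝ)) * ((ak k) ^ 2)⁻¹)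
    (summable_inv_ak_sq.mul_left _)
  intro k
  rw [Real.norm_eq_abs]
  have hb := G_bound m (ak k) R (one_le_ak k) hR1 n x (by rw [hR]; linarith [abs_nonneg x])
  rw [div_eq_mul_inv] at hb
  exact hb

lemma main_formula (m : ℕ) (hm : 2 ≤ m) (n : ℕ) : ∀ t : ℝ, 0 < t →
    iteratedDeriv n (fun s : ℝ => s ^ (m - 1) / (1 - Real.exp (-s))) t =
      (1 / 2) * (((m - 1).descFactorial n : ℝ)) * t ^ (m - 1 - n) +
        (((m - 2).descFactorial n : ℝ)) * t ^ (m - 2 - n) +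
        ∑' k : ℕ, iteratedDeriv n (G m (ak k)) t := by
  induction n with
  | zero =>
    intro t ht
    have hexp : Real.exp (-t) < 1 := by
      rw [show (1 : ℝ) = Real.exp 0 from (Real.exp_zero).symm]
      exact Real.exp_lt_exp.mpr (by linarith)
    have hden : (1 : ℝ) - Real.exp (-t) ≠ 0 := by linarith
    have hhs := (hasSum_kernel t ht).mul_left (t ^ (m - 1))
    have hfun : (fun k : ℕ => t ^ (m - 1) * (2 * t / (t ^ 2 + (2 * π * ((k : ℝ) + 1)) ^ 2))) =
        fun k : ℕ => G m (ak k) t := by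
      funext k
      have htm : t ^ m = t ^ (m - 1) * t := by
        rw [← pow_succ]
        congr 1
        omega
      rw [G, ak, htm, div_eq_mul_inv]
      ring
    rw [hfun] at hhs
    simp only [iteratedDeriv_zero]
    rw [hhs.tsum_eq]
    simp only [Nat.descFactorial_zero, Nat.cast_one, Nat.sub_zero, mul_one, one_mul]
    have htm2 : t ^ (m - 1) = t ^ (m - 2) * t := by
      rw [← pow_succ]
      congr 1
      omega
    rw [htm2]
    field_simp
    ring
  | succ n ih =>
    intro t ht
    rw [iteratedDeriv_succ]
    have hEv : (iteratedDeriv n (fun s : ℝ => s ^ (m - 1) / (1 - Real.exp (-s)))) =ᶠ[nhds t]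
        (fun s => (1 / 2) * (((m - 1).descFactorial n : ℝ)) * s ^ (m - 1 - n) +
          (((m - 2).descFactorial n : ℝ)) * s ^ (m - 2 - n) +
          ∑' k : ℕ, iteratedDeriv n (G m (ak k)) s) := by
      apply Filter.eventuallyEq_of_mem (Ioi_mem_nhds ht)
      intro s hs
      exact ih s hs
    rw [hEv.deriv_eq]
    have h1 := (hasDerivAt_pow (m - 1 - n) t).const_mul ((1 / 2) * (((m - 1).descFactorial n : ℝ)))
    have h2 := (hasDerivAt_pow (m - 2 - n) t).const_mul ((((m - 2).descFactorial n : ℝ)))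
    have hT : HasDerivAt (fun s : ℝ => ∑' k : ℕ, iteratedDeriv n (G m (ak k)) s)
        (∑' k : ℕ, iteratedDeriv (n + 1) (G m (ak k)) t) t := by
      have htR : (1 : ℝ) ≤ t + 1 := by linarith
      apply hasDerivAt_tsum_of_isPreconnected
        (u := fun k : ℕ => (2 ^ (n + 1) * (2 * (m ! : ℝ) * (t + 1) ^ m) * ((n + 1)! : ℝ)) *
          ((ak k) ^ 2)⁻¹)
        (summable_inv_ak_sq.mul_left _) isOpen_Ioo isPreconnected_Ioo
        (t := Set.Ioo (0 : ℝ) (t + 1)) (y₀ := t) (y := t)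
      · intro k y hy
        have hdiff : Differentiable ℝ (iteratedDeriv n (G m (ak k))) := by
          apply ContDiff.differentiable_iteratedDeriv n
            (contDiff_G m (ak k) (by linarith [one_le_ak k] : ak k ≠ 0))
          first
          | exact WithTop.coe_lt_top n
          | exact_mod_cast WithTop.coe_lt_top n
          | simp
        rw [iteratedDeriv_succ]
        exact (hdiff y).hasDerivAt
      · intro k y hy
        rw [Real.norm_eq_abs]
        have hb := G_bound m (ak k) (t + 1) (one_le_ak k) htR (n + 1) y (by
          rw [abs_of_pos hy.1]
          linarith [hy.2])
        rw [div_eq_mul_inv] at hb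
        exact hb
      · exact ⟨ht, by linarith⟩
      · exact summable_D m n t
      · exact ⟨ht, by linarith⟩
    have htotal := ((h1.fun_add h2).fun_add hT).deriv
    rw [htotal]
    rw [Nat.descFactorial_succ, Nat.descFactorial_succ,
      show m - 1 - n - 1 = m - 1 - (n + 1) from by omega,
      show m - 2 - n - 1 = m - 2 - (n + 1) from by omega]
    push_cast
    ring

end Stmt12Aux
end Part5

open Finset in
theorem stmt12 (m : ℕ) (hm : 2 ≤ m) (t : ℝ) (ht : 0 < t) :
    ((Nat.factorial (m-1) : ℝ) / 2) * t + (Nat.factorial (m-2) : ℝ)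
      ≤ iteratedDeriv (m-2) (fun s : ℝ => s ^ (m-1) / (1 - Real.exp (-s))) t := by
  have hform := Stmt12Aux.main_formula m hm (m - 2) t ht
  rw [hform]
  have hd1 : (m - 1).descFactorial (m - 2) = (m - 1)! := by
    have h := Nat.descFactorial_succ (m - 1) (m - 2)
    rw [show m - 2 + 1 = m - 1 from by omega, Nat.descFactorial_self,
      show m - 1 - (m - 2) = 1 from by omega, one_mul] at h
    exact h.symm
  have hd2 : (m - 2).descFactorial (m - 2) = (m - 2)! := Nat.descFactorial_self _
  have he1 : m - 1 - (m - 2) = 1 := by omega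
  have he2 : m - 2 - (m - 2) = 0 := by omega
  rw [hd1, hd2, he1, he2, pow_one, pow_zero, mul_one]
  have htsum : 0 ≤ ∑' k : ℕ, iteratedDeriv (m - 2) (Stmt12Aux.G m (Stmt12Aux.ak k)) t :=
    tsum_nonneg fun k => Stmt12Aux.G_nonneg m hm (Stmt12Aux.ak k) (Stmt12Aux.one_le_ak k) t
  have : ((m - 1)! : ℝ) / 2 * t = 1 / 2 * ((m - 1)! : ℝ) * t := by ring
  linarith
end
end
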